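/- arXiv:2405.11475 — 9 statements merged into one kernel-verified Lean document; each statement's English description precedes it below -/
import Mathlib

section
/- Let S be a string of length n ≥ 1. Then the set of minimal periods of the periodic prefixes of S, i.e., {per(P) : P is a prefix of S with |P| ≥ 2·per(P)}, has cardinality at most 2·⌊log₂ n⌋ + 2. -/
/-!
If `ρ` is the minimal period of a periodic prefix of `S`, then the prefix of length `2ρ` is the
square of a primitive word of length `ρ` (by the weak Fine–Wilf theorem). Three such primitive
square prefixes with roots `ρ₁ < ρ₂ < ρ₃ < 2ρ₁` cannot coexist: the differences `ρ₂ - ρ₁` and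
`ρ₃ - ρ₂` are periods of a long enough prefix that, by Fine–Wilf again, their gcd is a period of
the square of length `2ρ₁`, contradicting primitivity. Hence every dyadic range `[2ᵏ, 2ᵏ⁺¹)`
contains at most two such minimal periods, and only `⌊log₂ n⌋ + 1` ranges meet `[1, n]`.
-/

variable {α : Type*}

/-- `ρ` is a period of `T`: `1 ≤ ρ` and `T[i] = T[i+ρ]` for all valid `i`. -/
def IsPeriod (T : List α) (ρ : ℕ) : Prop :=
  1 ≤ ρ ∧ ∀ i : ℕ, i + ρ < T.length → T[i]? = T[i + ρ]?

/-- The minimal period of `T`. -/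
noncomputable def per (T : List α) : ℕ := sInf {ρ : ℕ | IsPeriod T ρ}

/-- Unlike `IsPeriod`, `d = 0` is allowed. -/
def IsPrefixPeriod (S : List α) (L d : ℕ) : Prop :=
  ∀ i : ℕ, i + d < L → S[i]? = S[i + d]?

namespace IsPrefixPeriod

variable {S : List α} {L d : ℕ}

theorem mono {L' : ℕ} (h : IsPrefixPeriod S L d) (hL : L' ≤ L) : IsPrefixPeriod S L' d :=
  fun i hi => h i (hi.trans_le hL)

theorem getElem?_add_mul (h : IsPrefixPeriod S L d) (i k : ℕ) (hk : i + k * d < L) :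
    S[i]? = S[i + k * d]? := by
  induction k with
  | zero => simp
  | succ k ih =>
    rw [ih (by nlinarith), show i + (k + 1) * d = i + k * d + d by ring]
    exact h _ (by linarith)

theorem sub {p q : ℕ} (hp : IsPrefixPeriod S L p) (hq : IsPrefixPeriod S L q) (hpq : p ≤ q) :
    IsPrefixPeriod S (L - p) (q - p) := by
  intro i hi
  rw [hq i (by omega), ← show i + (q - p) + p = i + q by omega]
  exact (hp _ (by omega)).symm

/-- A period `g` of a prefix of length `m ≥ c + g` propagates along a longer prefix of period `c`:
every position is congruent modulo `c` to one in `[0, c)`. -/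
theorem extend {m c g : ℕ} (hc : IsPrefixPeriod S L c) (hg : IsPrefixPeriod S m g)
    (hm : c + g ≤ m) (hc0 : 0 < c) : IsPrefixPeriod S L g := by
  intro j hj
  have hj_div := Nat.mod_add_div' j c
  have hj_mod := Nat.mod_lt j hc0
  have h₁ := hc.getElem?_add_mul (j % c) (j / c) (by omega)
  have h₂ := hc.getElem?_add_mul (j % c + g) (j / c) (by omega)
  rw [hj_div] at h₁
  rw [show j % c + g + j / c * c = j + g by omega] at h₂
  exact h₁.symm.trans ((hg _ (by omega)).trans h₂)

/-- The weak Fine–Wilf theorem. -/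
theorem gcd {p q : ℕ} (hp : IsPrefixPeriod S L p) (hq : IsPrefixPeriod S L q)
    (hL : p + q ≤ L) : IsPrefixPeriod S L (Nat.gcd p q) := by
  induction hs : p + q using Nat.strong_induction_on generalizing p q L with
  | _ s ih =>
    wlog hpq : p ≤ q generalizing p q
    · rw [Nat.gcd_comm]
      exact this hq hp (by omega) (by omega) (by omega)
    rcases Nat.eq_zero_or_pos p with rfl | hp0
    · simpa using hq
    rcases hpq.eq_or_lt with rfl | hlt
    · simpa using hp
    have hg := ih q (by omega) (hp.mono (Nat.sub_le L p)) (hp.sub hq hpq) (by omega) (by omega)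
    have hgq : Nat.gcd p (q - p) ≤ q - p := Nat.gcd_le_right _ (by omega)
    rw [Nat.gcd_sub_self_right hpq] at hg hgq
    exact hp.extend hg (by omega) hp0

end IsPrefixPeriod

theorem isPeriod_take_iff (S : List α) {p : ℕ} (hpn : p ≤ S.length) (d : ℕ) :
    IsPeriod (S.take p) d ↔ 1 ≤ d ∧ IsPrefixPeriod S p d := by
  have hlen : (S.take p).length = p := List.length_take_of_le hpn
  refine and_congr_right fun _ => forall_congr' fun i => ?_
  rw [hlen]
  refine imp_congr_right fun hi => ?_
  rw [List.getElem?_take_of_lt (by omega), List.getElem?_take_of_lt hi]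

/-- `S` begins with a square `uu` where `|u| = ρ` and `u` is primitive, i.e. `per (uu) = ρ`. -/
def IsPrimitiveSquarePrefix (S : List α) (ρ : ℕ) : Prop :=
  0 < ρ ∧ IsPrefixPeriod S (2 * ρ) ρ ∧ ∀ d, 0 < d → d < ρ → ¬ IsPrefixPeriod S (2 * ρ) d

theorem isPrimitiveSquarePrefix_per_take (S : List α) {p : ℕ} (hp : 1 ≤ p) (hpn : p ≤ S.length)
    (hper : 2 * per (S.take p) ≤ p) : IsPrimitiveSquarePrefix S (per (S.take p)) := by
  set ρ := per (S.take p)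
  have hρ : IsPeriod (S.take p) ρ :=
    Nat.sInf_mem (s := {ρ | IsPeriod (S.take p) ρ}) ⟨p, hp, fun i hi => by simp at hi⟩
  obtain ⟨hρ0, hρS⟩ := (isPeriod_take_iff S hpn ρ).mp hρ
  refine ⟨hρ0, hρS.mono hper, fun d hd0 hdρ hd => ?_⟩
  have hgd : Nat.gcd d ρ ≤ d := Nat.gcd_le_left ρ hd0
  have hg := hρS.extend (hd.gcd (hρS.mono hper) (by omega)) (by omega) hρ0
  have hg0 : 0 < Nat.gcd d ρ := Nat.gcd_pos_of_pos_left ρ hd0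
  have : ρ ≤ Nat.gcd d ρ := Nat.sInf_le ((isPeriod_take_iff S hpn _).mpr ⟨hg0, hg⟩)
  omega

theorem IsPrimitiveSquarePrefix.two_mul_le_of_lt {S : List α} {ρ₁ ρ₂ ρ₃ : ℕ}
    (h₁ : IsPrimitiveSquarePrefix S ρ₁) (h₂ : IsPrefixPeriod S (2 * ρ₂) ρ₂)
    (h₃ : IsPrefixPeriod S (2 * ρ₃) ρ₃) (h₁₂ : ρ₁ < ρ₂) (h₂₃ : ρ₂ < ρ₃) : 2 * ρ₁ ≤ ρ₃ := by
  obtain ⟨hρ₁, hP₁, hprim⟩ := h₁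
  by_contra! h₃₁
  have ha : IsPrefixPeriod S ρ₁ (ρ₂ - ρ₁) := by
    simpa [two_mul] using hP₁.sub (h₂.mono (by omega)) h₁₂.le
  have hc : IsPrefixPeriod S ρ₂ (ρ₃ - ρ₂) := by
    simpa [two_mul] using h₂.sub (h₃.mono (by omega)) h₂₃.le
  set g := Nat.gcd (ρ₂ - ρ₁) (ρ₃ - ρ₂)
  have hg0 : 0 < g := Nat.gcd_pos_of_pos_left _ (by omega)
  have hga : g ≤ ρ₂ - ρ₁ := Nat.gcd_le_left _ (by omega)
  have hg₁ : IsPrefixPeriod S ρ₁ g := ha.gcd (hc.mono h₁₂.le) (by omega)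
  have hg₂ : IsPrefixPeriod S ρ₂ g := hc.extend hg₁ (by omega) (by omega)
  exact hprim g hg0 (by omega) (hP₁.extend hg₂ (by omega) hρ₁)

theorem Finset.card_le_two_of_forall_not_lt_lt {β : Type*} [LinearOrder β] {s : Finset β}
    (h : ∀ x ∈ s, ∀ y ∈ s, ∀ z ∈ s, x < y → y < z → False) : s.card ≤ 2 := by
  by_contra! hs
  obtain ⟨t, hts, ht⟩ := Finset.exists_subset_card_eq (s := s) (n := 3) hs
  have mem (i : Fin 3) : t.orderEmbOfFin ht i ∈ s := hts (t.orderEmbOfFin_mem ht i)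
  exact h _ (mem 0) _ (mem 1) _ (mem 2) ((t.orderEmbOfFin ht).strictMono (by decide))
    ((t.orderEmbOfFin ht).strictMono (by decide))

theorem Set.ncard_le_two_mul_log_add_two {F : Set ℕ} {n : ℕ} (hF : F ⊆ Set.Icc 1 n)
    (h : ∀ x ∈ F, ∀ y ∈ F, ∀ z ∈ F, x < y → y < z → 2 * x ≤ z) :
    F.ncard ≤ 2 * Nat.log 2 n + 2 := by
  have hfin : F.Finite := (Set.finite_Icc 1 n).subset hF
  have hlog : Set.MapsTo (Nat.log 2) hfin.toFinset (Finset.range (Nat.log 2 n + 1)) := by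
    intro x hx
    simpa [Nat.lt_succ_iff] using Nat.log_mono_right (hF (hfin.mem_toFinset.mp hx)).2
  rw [Set.ncard_eq_toFinset_card F hfin, Finset.card_eq_sum_card_fiberwise hlog]
  calc _ ≤ ∑ _k ∈ Finset.range (Nat.log 2 n + 1), 2 := by
        refine Finset.sum_le_sum fun k _ => Finset.card_le_two_of_forall_not_lt_lt ?_
        simp only [Finset.mem_filter, Set.Finite.mem_toFinset]
        rintro x ⟨hx, rfl⟩ y ⟨hy, -⟩ z ⟨hz, hzx⟩ hxy hyz
        have hx2 : 2 ^ Nat.log 2 x ≤ x := Nat.pow_log_le_self 2 (by have := (hF hx).1; omega)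
        have hz2 : z < 2 ^ (Nat.log 2 z + 1) := Nat.lt_pow_succ_log_self (by norm_num) z
        rw [hzx, pow_succ] at hz2
        have := h x hx y hy z hz hxy hyz
        omega
    _ = 2 * Nat.log 2 n + 2 := by simp [mul_add, mul_comm]

theorem stmt0_general (S : List α) (n : ℕ) (hn : S.length = n) :
    {ρ : ℕ | ∃ p : ℕ, 1 ≤ p ∧ p ≤ n ∧ per (S.take p) = ρ ∧ 2 * ρ ≤ p}.Finite ∧
    {ρ : ℕ | ∃ p : ℕ, 1 ≤ p ∧ p ≤ n ∧ per (S.take p) = ρ ∧ 2 * ρ ≤ p}.ncard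
      ≤ 2 * Nat.log 2 n + 2 := by
  set F := {ρ : ℕ | ∃ p : ℕ, 1 ≤ p ∧ p ≤ n ∧ per (S.take p) = ρ ∧ 2 * ρ ≤ p}
  have hprim : ∀ ρ ∈ F, IsPrimitiveSquarePrefix S ρ := by
    rintro _ ⟨p, hp, hpn, rfl, hper⟩
    exact isPrimitiveSquarePrefix_per_take S hp (hn ▸ hpn) hper
  have hF : F ⊆ Set.Icc 1 n := by
    intro ρ hρ
    have hρ0 := (hprim ρ hρ).1
    obtain ⟨p, -, hpn, -, hper⟩ := hρ
    exact ⟨hρ0, by omega⟩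
  refine ⟨(Set.finite_Icc 1 n).subset hF, Set.ncard_le_two_mul_log_add_two hF ?_⟩
  intro x hx y hy z hz hxy hyz
  exact (hprim x hx).two_mul_le_of_lt (hprim y hy).2.1 (hprim z hz).2.1 hxy hyz

/-- The set of minimal periods of the periodic prefixes of `S` (a prefix `P = S.take p`
is periodic when `|P| ≥ 2 · per P`) has cardinality at most `2·⌊log₂ n⌋ + 2`. -/
theorem stmt0 (S : List α) (n : ℕ) (hn : S.length = n) (h1 : 1 ≤ n) :
    {ρ : ℕ | ∃ p : ℕ, 1 ≤ p ∧ p ≤ n ∧ per (S.take p) = ρ ∧ 2 * ρ ≤ p}.Finite ∧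
    {ρ : ℕ | ∃ p : ℕ, 1 ≤ p ∧ p ≤ n ∧ per (S.take p) = ρ ∧ 2 * ρ ≤ p}.ncard
      ≤ 2 * Nat.log 2 n + 2 :=
  stmt0_general S n hn
end

section
/- Let S be a string of length n ≥ 1. If B₁ and B₂ are nonempty aperiodic borders of S with |B₁| < |B₂|, then |B₂| > 2|B₁|. Consequently, S has at most ⌊log₂ n⌋ + 1 distinct nonempty aperiodic borders. -/
variable {α : Type*}

/-- `B` is a border of `S`: it occurs both as a prefix and as a suffix of `S`. -/
def IsBorder (B S : List α) : Prop := B <+: S ∧ B <:+ S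

/-- A proper border yields a period equal to the length difference. -/
lemma period_of_border {B T : List α} (h : IsBorder B T) (hlt : B.length < T.length) :
    IsPeriod T (T.length - B.length) := by
  obtain ⟨⟨t, ht⟩, ⟨h', hh⟩⟩ := h
  set ρ := T.length - B.length with hρ
  have hlen : h'.length = ρ := by
    have := congrArg List.length hh
    simp at this
    omega
  refine ⟨by omega, fun i hi => ?_⟩
  have hiB : i < B.length := by omega
  have e1 : T[i]? = B[i]? := by
    rw [← ht]
    exact List.getElem?_append_left hiB
  have e2 : T[i + ρ]? = B[i]? := by
    rw [← hh, List.getElem?_append_right (by omega)]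
    congr 1
    omega
  rw [e1, e2]

lemma key_step {S : List α} (B₁ B₂ : List α) (hb1 : IsBorder B₁ S) (hb2 : IsBorder B₂ S)
    (hap2 : B₂.length < 2 * per B₂) (hlt : B₁.length < B₂.length) :
    2 * B₁.length < B₂.length := by
  have hb12 : IsBorder B₁ B₂ :=
    ⟨List.prefix_of_prefix_length_le hb1.1 hb2.1 hlt.le,
     List.suffix_of_suffix_length_le hb1.2 hb2.2 hlt.le⟩
  have hper : IsPeriod B₂ (B₂.length - B₁.length) := period_of_border hb12 hlt
  have hle : per B₂ ≤ B₂.length - B₁.length := Nat.sInf_le hper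
  omega

/-- If `B₁, B₂` are nonempty aperiodic borders of `S` with `|B₁| < |B₂|`, then
`|B₂| > 2|B₁|`; consequently `S` has at most `⌊log₂ n⌋ + 1` distinct nonempty
aperiodic borders. -/
theorem stmt1 (S : List α) (n : ℕ) (hn : S.length = n) (h1 : 1 ≤ n) :
    (∀ B₁ B₂ : List α, IsBorder B₁ S → IsBorder B₂ S → B₁ ≠ [] → B₂ ≠ [] →
        B₁.length < 2 * per B₁ → B₂.length < 2 * per B₂ →
        B₁.length < B₂.length → 2 * B₁.length < B₂.length) ∧
    {B : List α | IsBorder B S ∧ B ≠ [] ∧ B.length < 2 * per B}.Finite ∧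
    {B : List α | IsBorder B S ∧ B ≠ [] ∧ B.length < 2 * per B}.ncard
      ≤ Nat.log 2 n + 1 := by
  set s := {B : List α | IsBorder B S ∧ B ≠ [] ∧ B.length < 2 * per B} with hs
  -- key: log of length is strictly monotone comparing members of s
  have hlog : ∀ B₁ ∈ s, ∀ B₂ ∈ s, B₁.length < B₂.length →
      Nat.log 2 B₁.length < Nat.log 2 B₂.length := by
    intro B₁ h₁ B₂ h₂ hlt
    have hk : 2 * B₁.length < B₂.length := key_step B₁ B₂ h₁.1 h₂.1 h₂.2.2 hlt
    have hne : B₁.length ≠ 0 := by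
      simpa [List.length_eq_zero_iff] using h₁.2.1
    have : Nat.log 2 (B₁.length * 2) = Nat.log 2 B₁.length + 1 :=
      Nat.log_mul_base (by norm_num) hne
    have hmono := Nat.log_mono_right (b := 2) (by omega : B₁.length * 2 ≤ B₂.length)
    omega
  have hinj : Set.InjOn (fun B => Nat.log 2 B.length) s := by
    intro B₁ h₁ B₂ h₂ he
    have hlen : B₁.length = B₂.length := by
      rcases lt_trichotomy B₁.length B₂.length with h | h | h
      · exact absurd he (hlog B₁ h₁ B₂ h₂ h).ne
      · exact h
      · exact absurd he.symm (hlog B₂ h₂ B₁ h₁ h).ne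
    have e1 := List.prefix_iff_eq_take.mp h₁.1.1
    have e2 := List.prefix_iff_eq_take.mp h₂.1.1
    rw [e1, e2, hlen]
  have hmaps : ∀ B ∈ s, Nat.log 2 B.length ∈ ↑(Finset.range (Nat.log 2 n + 1)) := by
    intro B hB
    have : B.length ≤ n := hn ▸ hB.1.1.length_le
    simp only [Finset.mem_coe, Finset.mem_range, Nat.lt_succ_iff]
    exact Nat.log_mono_right this
  constructor
  · intro B₁ B₂ hb1 hb2 _ _ _ hap2 hlt
    exact key_step B₁ B₂ hb1 hb2 hap2 hlt
  constructor
  · exact Set.Finite.of_finite_image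
      ((Finset.range (Nat.log 2 n + 1)).finite_toSet.subset
        (by rintro _ ⟨B, hB, rfl⟩; exact hmaps B hB)) hinj
  · calc s.ncard ≤ (↑(Finset.range (Nat.log 2 n + 1)) : Set ℕ).ncard :=
        Set.ncard_le_ncard_of_injOn _ hmaps hinj (Finset.finite_toSet _)
      _ = Nat.log 2 n + 1 := by rw [Set.ncard_coe_finset, Finset.card_range]
end

section
/- Let S be a string of length n ≥ 1. If B₁ and B₂ are short periodic borders of S with |B₁| < |B₂|, then 2|B₂| > 3|B₁|. Consequently, S has at most ⌊log_{1.5} n⌋ + 1 distinct short periodic borders. -/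
variable {α : Type*}

/-- `T` is short periodic: `2·per T ≤ |T| ≤ 3·per T − 1`. -/
def ShortPeriodic (T : List α) : Prop :=
  2 * per T ≤ T.length ∧ T.length < 3 * per T

/-- If `B₁, B₂` are short periodic borders of `S` with `|B₁| < |B₂|`, then
`2|B₂| > 3|B₁|`; consequently `S` has at most `⌊log_{1.5} n⌋ + 1` distinct
short periodic borders. -/
theorem stmt2 (S : List α) (n : ℕ) (hn : S.length = n) (h1 : 1 ≤ n) :
    (∀ B₁ B₂ : List α, IsBorder B₁ S → IsBorder B₂ S →
        ShortPeriodic B₁ → ShortPeriodic B₂ →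
        B₁.length < B₂.length → 3 * B₁.length < 2 * B₂.length) ∧
    {B : List α | IsBorder B S ∧ ShortPeriodic B}.Finite ∧
    {B : List α | IsBorder B S ∧ ShortPeriodic B}.ncard
      ≤ ⌊Real.logb 1.5 (n : ℝ)⌋₊ + 1 := by
  -- main growth lemma
  have key : ∀ B₁ B₂ : List α, IsBorder B₁ S → IsBorder B₂ S →
      ShortPeriodic B₁ → ShortPeriodic B₂ →
      B₁.length < B₂.length → 3 * B₁.length < 2 * B₂.length := by
    intro B₁ B₂ hb1 hb2 _ hp2 hlt
    by_contra hcon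
    push_neg at hcon
    -- B₁ is a border of B₂
    have hpre : B₁ <+: B₂ :=
      List.prefix_of_prefix_length_le hb1.1 hb2.1 hlt.le
    have hsuf : B₁ <:+ B₂ :=
      List.suffix_of_suffix_length_le hb1.2 hb2.2 hlt.le
    obtain ⟨t, ht⟩ := hpre
    obtain ⟨h, hh⟩ := hsuf
    have hlen : B₂.length = h.length + B₁.length := by
      rw [← hh, List.length_append]
    have hperiod : IsPeriod B₂ h.length := by
      constructor
      · omega
      · intro i hi
        have hi' : i < B₁.length := by omega
        have e1 : B₂[i]? = B₁[i]? := by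
          rw [← ht, List.getElem?_append, if_pos hi']
        have e2 : B₂[i + h.length]? = B₁[i]? := by
          rw [← hh, List.getElem?_append_right (by omega)]
          congr 1
          omega
        rw [e1, e2]
    have hle : per B₂ ≤ h.length := Nat.sInf_le hperiod
    have h3 : B₂.length < 3 * per B₂ := hp2.2
    omega
  refine ⟨key, ?_⟩
  -- every border equals a take of S, hence unique per length
  have htake : ∀ B : List α, IsBorder B S → B = S.take B.length := by
    intro B hB
    exact List.prefix_iff_eq_take.mp hB.1
  have hfin : {B : List α | IsBorder B S ∧ ShortPeriodic B}.Finite := by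
    apply Set.Finite.subset ((Set.finite_Iic n).image (fun k => S.take k))
    intro B hB
    exact ⟨B.length, by
      simp only [Set.mem_Iic]
      calc B.length ≤ S.length := hB.1.1.length_le
        _ = n := hn, (htake B hB.1).symm⟩
  refine ⟨hfin, ?_⟩
  have h15 : (1 : ℝ) < 1.5 := by norm_num
  -- lengths of short periodic borders are ≥ 2
  have hlen2 : ∀ B : List α, ShortPeriodic B → 2 ≤ B.length := by
    intro B hB
    have := hB.1
    have := hB.2
    omega
  -- the map B ↦ ⌊logb 1.5 |B|⌋₊ is injective on the set and lands in Iic m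
  have hmain : {B : List α | IsBorder B S ∧ ShortPeriodic B}.ncard
      ≤ (↑(Finset.Iic (⌊Real.logb 1.5 (n : ℝ)⌋₊)) : Set ℕ).ncard := by
    apply Set.ncard_le_ncard_of_injOn (fun B => ⌊Real.logb 1.5 (B.length : ℝ)⌋₊)
    · intro B hB
      simp only [Finset.coe_Iic, Set.mem_Iic]
      apply Nat.floor_le_floor
      apply Real.logb_le_logb_of_le h15
      · have := hlen2 B hB.2
        positivity
      · exact_mod_cast hn ▸ hB.1.1.length_le
    · -- injectivity
      intro B₁ hB₁ B₂ hB₂ hfeq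
      have hstep : ∀ C₁ C₂ : List α,
          C₁ ∈ {B : List α | IsBorder B S ∧ ShortPeriodic B} →
          C₂ ∈ {B : List α | IsBorder B S ∧ ShortPeriodic B} →
          C₁.length < C₂.length →
          ⌊Real.logb 1.5 (C₁.length : ℝ)⌋₊ < ⌊Real.logb 1.5 (C₂.length : ℝ)⌋₊ := by
        intro C₁ C₂ hC₁ hC₂ hlt
        have hgrow := key C₁ C₂ hC₁.1 hC₂.1 hC₁.2 hC₂.2 hlt
        have h2 : 2 ≤ C₁.length := hlen2 C₁ hC₁.2
        have hr : (1.5 : ℝ) * (C₁.length : ℝ) ≤ (C₂.length : ℝ) := by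
          have : (3 : ℝ) * C₁.length < 2 * C₂.length := by exact_mod_cast hgrow
          linarith
        have hpos : (0 : ℝ) < 1.5 * (C₁.length : ℝ) := by positivity
        have hlog : Real.logb 1.5 (C₁.length : ℝ) + 1
            ≤ Real.logb 1.5 (C₂.length : ℝ) := by
          have := Real.logb_le_logb_of_le h15 hpos hr
          rwa [Real.logb_mul (by norm_num) (by positivity),
            Real.logb_self_eq_one h15, add_comm] at this
        have hnn : 0 ≤ Real.logb 1.5 (C₁.length : ℝ) :=
          Real.logb_nonneg h15 (by exact_mod_cast Nat.one_le_of_lt h2)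
        calc ⌊Real.logb 1.5 (C₁.length : ℝ)⌋₊
            < ⌊Real.logb 1.5 (C₁.length : ℝ)⌋₊ + 1 := Nat.lt_succ_self _
          _ = ⌊Real.logb 1.5 (C₁.length : ℝ) + 1⌋₊ := (Nat.floor_add_one hnn).symm
          _ ≤ ⌊Real.logb 1.5 (C₂.length : ℝ)⌋₊ := Nat.floor_le_floor hlog
      have hlens : B₁.length = B₂.length := by
        rcases lt_trichotomy B₁.length B₂.length with h | h | h
        · exact absurd hfeq (hstep B₁ B₂ hB₁ hB₂ h).ne
        · exact h
        · exact absurd hfeq.symm (hstep B₂ B₁ hB₂ hB₁ h).ne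
      rw [htake B₁ hB₁.1, htake B₂ hB₂.1, hlens]
  rw [Set.ncard_coe_finset, Nat.card_Iic] at hmain
  exact hmain
end

section
/- Let S be a string, let ρ ≥ 1, and let i ∈ [1..|S|] be an index. Then there are at most two ρ-periodic runs S[ℓ..r] of S with ℓ ≤ i ≤ r. -/
variable {α : Type*}

/-- `sub S i j` is the substring `S[i..j]` (1-indexed, inclusive endpoints). -/
def sub (S : List α) (i j : ℕ) : List α := (S.take j).drop (i - 1)

/-- `S[ℓ..r]` is a `ρ`-periodic run of `S`: it is `ρ`-periodic
(`per = ρ` and length `≥ 2ρ`) and it is not contained in a longer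
`ρ`-periodic substring of `S`. -/
def IsRun (S : List α) (ρ ℓ r : ℕ) : Prop :=
  1 ≤ ℓ ∧ ℓ ≤ r ∧ r ≤ S.length ∧
  per (sub S ℓ r) = ρ ∧ 2 * ρ ≤ r - ℓ + 1 ∧
  ∀ ℓ' r' : ℕ, 1 ≤ ℓ' → ℓ' ≤ ℓ → r ≤ r' → r' ≤ S.length →
    per (sub S ℓ' r') = ρ → 2 * ρ ≤ r' - ℓ' + 1 → ℓ' = ℓ ∧ r' = r

lemma length_sub (S : List α) (ℓ r : ℕ) (h1 : 1 ≤ ℓ) (h2 : r ≤ S.length) :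
    (sub S ℓ r).length = r - (ℓ - 1) := by
  simp only [sub, List.length_drop, List.length_take]
  omega

lemma sub_getElem? (S : List α) (ℓ r k : ℕ) (h : ℓ - 1 + k < r) :
    (sub S ℓ r)[k]? = S[ℓ - 1 + k]? := by
  rw [sub, List.getElem?_drop, List.getElem?_take_of_lt h]

lemma period_set_nonempty (T : List α) : {ρ : ℕ | IsPeriod T ρ}.Nonempty :=
  ⟨T.length + 1, by omega, fun i h => by omega⟩

lemma per_isPeriod (T : List α) : IsPeriod T (per T) :=
  Nat.sInf_mem (period_set_nonempty T)

lemma isPeriod_sub_mono (S : List α) (ℓ1 r1 ℓ2 r2 ρ' : ℕ)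
    (hℓ1 : 1 ≤ ℓ1) (h12 : ℓ1 ≤ ℓ2) (hr : r2 ≤ r1) (hr1 : r1 ≤ S.length)
    (hp : IsPeriod (sub S ℓ1 r1) ρ') : IsPeriod (sub S ℓ2 r2) ρ' := by
  refine ⟨hp.1, fun k hk => ?_⟩
  rw [length_sub S ℓ2 r2 (by omega) (by omega)] at hk
  have hj := hp.2 (ℓ2 - ℓ1 + k)
    (by rw [length_sub S ℓ1 r1 hℓ1 hr1]; omega)
  rw [sub_getElem? S ℓ1 r1 (ℓ2 - ℓ1 + k) (by omega),
      sub_getElem? S ℓ1 r1 (ℓ2 - ℓ1 + k + ρ') (by omega)] at hj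
  rw [sub_getElem? S ℓ2 r2 k (by omega),
      sub_getElem? S ℓ2 r2 (k + ρ') (by omega)]
  have e1 : ℓ1 - 1 + (ℓ2 - ℓ1 + k) = ℓ2 - 1 + k := by omega
  have e2 : ℓ1 - 1 + (ℓ2 - ℓ1 + k + ρ') = ℓ2 - 1 + (k + ρ') := by omega
  rw [e1, e2] at hj
  exact hj

lemma contain_eq (S : List α) (ρ ℓ1 r1 ℓ2 r2 : ℕ)
    (h1 : IsRun S ρ ℓ1 r1) (h2 : IsRun S ρ ℓ2 r2)
    (hℓ : ℓ1 ≤ ℓ2) (hr : r2 ≤ r1) : ℓ1 = ℓ2 ∧ r1 = r2 := by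
  have := h2.2.2.2.2.2 ℓ1 r1 h1.1 hℓ hr h1.2.2.1 h1.2.2.2.1 h1.2.2.2.2.1
  exact this

lemma merge_eq (S : List α) (ρ ℓ1 r1 ℓ2 r2 : ℕ)
    (h1 : IsRun S ρ ℓ1 r1) (h2 : IsRun S ρ ℓ2 r2)
    (hℓ : ℓ1 ≤ ℓ2) (hr : r1 ≤ r2) (hov : ℓ2 + ρ ≤ r1 + 1) :
    ℓ1 = ℓ2 ∧ r1 = r2 := by
  obtain ⟨hℓ1, hlr1, hr1S, hper1, hlen1, hmax1⟩ := h1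
  obtain ⟨hℓ2, hlr2, hr2S, hper2, hlen2, hmax2⟩ := h2
  have hP1 : IsPeriod (sub S ℓ1 r1) ρ := hper1 ▸ per_isPeriod _
  have hP2 : IsPeriod (sub S ℓ2 r2) ρ := hper2 ▸ per_isPeriod _
  have hρ : 1 ≤ ρ := hP1.1
  have hPU : IsPeriod (sub S ℓ1 r2) ρ := by
    refine ⟨hρ, fun k hk => ?_⟩
    rw [length_sub S ℓ1 r2 hℓ1 hr2S] at hk
    rw [sub_getElem? S ℓ1 r2 k (by omega),
        sub_getElem? S ℓ1 r2 (k + ρ) (by omega)]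
    by_cases hc : ℓ1 - 1 + (k + ρ) < r1
    · have hj := hP1.2 k (by rw [length_sub S ℓ1 r1 hℓ1 hr1S]; omega)
      rw [sub_getElem? S ℓ1 r1 k (by omega),
          sub_getElem? S ℓ1 r1 (k + ρ) (by omega)] at hj
      exact hj
    · have hk2 : ℓ2 ≤ ℓ1 + k := by omega
      have hj := hP2.2 (ℓ1 + k - ℓ2)
        (by rw [length_sub S ℓ2 r2 hℓ2 hr2S]; omega)
      rw [sub_getElem? S ℓ2 r2 (ℓ1 + k - ℓ2) (by omega),
          sub_getElem? S ℓ2 r2 (ℓ1 + k - ℓ2 + ρ) (by omega)] at hj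
      have e1 : ℓ2 - 1 + (ℓ1 + k - ℓ2) = ℓ1 - 1 + k := by omega
      have e2 : ℓ2 - 1 + (ℓ1 + k - ℓ2 + ρ) = ℓ1 - 1 + (k + ρ) := by omega
      rw [e1, e2] at hj
      exact hj
  have hle : per (sub S ℓ1 r2) ≤ ρ := Nat.sInf_le hPU
  have hge : ρ ≤ per (sub S ℓ1 r2) := by
    have hm : IsPeriod (sub S ℓ1 r1) (per (sub S ℓ1 r2)) :=
      isPeriod_sub_mono S ℓ1 r2 ℓ1 r1 _ hℓ1 le_rfl hr hr2S (per_isPeriod _)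
    calc ρ = per (sub S ℓ1 r1) := hper1.symm
      _ ≤ _ := Nat.sInf_le hm
  have hperU : per (sub S ℓ1 r2) = ρ := le_antisymm hle hge
  have e1 := hmax1 ℓ1 r2 hℓ1 le_rfl hr hr2S hperU (by omega)
  have e2 := hmax2 ℓ1 r2 hℓ1 hℓ le_rfl hr2S hperU (by omega)
  exact ⟨e2.1, e1.2.symm⟩

lemma no_three (S : List α) (ρ i : ℕ)
    (ℓ1 r1 ℓ2 r2 ℓ3 r3 : ℕ)
    (h1 : IsRun S ρ ℓ1 r1) (h2 : IsRun S ρ ℓ2 r2) (h3 : IsRun S ρ ℓ3 r3)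
    (hi1 : ℓ1 ≤ i ∧ i ≤ r1) (hi2 : ℓ2 ≤ i ∧ i ≤ r2) (hi3 : ℓ3 ≤ i ∧ i ≤ r3)
    (h12 : ℓ1 < ℓ2) (h23 : ℓ2 < ℓ3) : False := by
  have hρ : 1 ≤ ρ := (per_isPeriod (sub S ℓ1 r1)).1.trans_eq (by rw [h1.2.2.2.1])
  have hr12 : r1 < r2 := by
    by_contra h
    push_neg at h
    have := (contain_eq S ρ ℓ1 r1 ℓ2 r2 h1 h2 h12.le h).1
    omega
  have hr23 : r2 < r3 := by
    by_contra h
    push_neg at h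
    have := (contain_eq S ρ ℓ2 r2 ℓ3 r3 h2 h3 h23.le h).1
    omega
  have hm12 : r1 + 1 < ℓ2 + ρ := by
    by_contra h
    push_neg at h
    have := (merge_eq S ρ ℓ1 r1 ℓ2 r2 h1 h2 h12.le hr12.le h).1
    omega
  have hm23 : r2 + 1 < ℓ3 + ρ := by
    by_contra h
    push_neg at h
    have := (merge_eq S ρ ℓ2 r2 ℓ3 r3 h2 h3 h23.le hr23.le h).1
    omega
  have hlen2 : 2 * ρ ≤ r2 - ℓ2 + 1 := h2.2.2.2.2.1
  have hlr2 : ℓ2 ≤ r2 := h2.2.1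
  have hA : ℓ3 ≤ i := hi3.1
  have hB : i ≤ r1 := hi1.2
  omega

/-- Every index `i` of `S` is contained in at most two `ρ`-periodic runs. -/
theorem stmt4 (S : List α) (ρ : ℕ) (hρ : 1 ≤ ρ) (i : ℕ)
    (hi1 : 1 ≤ i) (hi2 : i ≤ S.length) :
    {p : ℕ × ℕ | IsRun S ρ p.1 p.2 ∧ p.1 ≤ i ∧ i ≤ p.2}.Finite ∧
    {p : ℕ × ℕ | IsRun S ρ p.1 p.2 ∧ p.1 ≤ i ∧ i ≤ p.2}.ncard ≤ 2 := by
  set F := {p : ℕ × ℕ | IsRun S ρ p.1 p.2 ∧ p.1 ≤ i ∧ i ≤ p.2} with hF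
  have hfin : F.Finite := by
    apply Set.Finite.subset ((Set.finite_Iic i).prod (Set.finite_Iic S.length))
    rintro ⟨ℓ, r⟩ ⟨hrun, hl, hr⟩
    exact ⟨hl, hrun.2.2.1⟩
  refine ⟨hfin, ?_⟩
  by_contra h
  push_neg at h
  obtain ⟨a, b, c, ha, hb, hc, hab, hac, hbc⟩ := (Set.two_lt_ncard_iff hfin).mp h
  have hne : ∀ p q : ℕ × ℕ, p ∈ F → q ∈ F → p ≠ q → p.1 ≠ q.1 := by
    intro p q hp hq hpq he
    rcases le_total p.2 q.2 with hh | hh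
    · have := contain_eq S ρ q.1 q.2 p.1 p.2 hq.1 hp.1 he.ge hh
      exact hpq (Prod.ext this.1.symm this.2.symm)
    · have := contain_eq S ρ p.1 p.2 q.1 q.2 hp.1 hq.1 he.le hh
      exact hpq (Prod.ext this.1 this.2)
  have H : ∀ p q r : ℕ × ℕ, p ∈ F → q ∈ F → r ∈ F → p.1 < q.1 → q.1 < r.1 → False :=
    fun p q r hp hq hr h1 h2 =>
      no_three S ρ i p.1 p.2 q.1 q.2 r.1 r.2 hp.1 hq.1 hr.1 hp.2 hq.2 hr.2 h1 h2
  have d1 := hne a b ha hb hab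
  have d2 := hne a c ha hc hac
  have d3 := hne b c hb hc hbc
  rcases lt_or_gt_of_ne d1 with h1 | h1 <;>
    rcases lt_or_gt_of_ne d2 with h2 | h2 <;>
      rcases lt_or_gt_of_ne d3 with h3 | h3 <;>
  first
    | omega
    | exact H a b c ha hb hc (by omega) (by omega)
    | exact H a c b ha hc hb (by omega) (by omega)
    | exact H c a b hc ha hb (by omega) (by omega)
    | exact H b a c hb ha hc (by omega) (by omega)
    | exact H b c a hb hc ha (by omega) (by omega)
    | exact H c b a hc hb ha (by omega) (by omega)
end

section
/- Let S be a string and let 1 ≤ x ≤ y < |S|. If S[x..y] is ρ-periodic and S[x..y+1] is not ρ-periodic, then S[x..y+1] is aperiodic; that is, 2·per(S[x..y+1]) > y − x + 2. -/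
variable {α : Type*}

lemma isPeriod_take {l : List α} {ρ : ℕ} (h : IsPeriod l ρ) (n : ℕ) :
    IsPeriod (l.take n) ρ := by
  refine ⟨h.1, fun i hi => ?_⟩
  simp only [List.length_take, lt_min_iff] at hi
  rw [List.getElem?_take, List.getElem?_take, if_pos (by omega), if_pos (by omega)]
  exact h.2 i hi.2

lemma isPeriod_of_len {l : List α} {ρ : ℕ} (h1 : 1 ≤ ρ) (h2 : l.length ≤ ρ) :
    IsPeriod l ρ := ⟨h1, fun i hi => by omega⟩

lemma isPeriod_mul {l : List α} {ρ : ℕ} (h : IsPeriod l ρ) :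
    ∀ k i, i + k * ρ < l.length → l[i]? = l[i + k * ρ]? := by
  intro k
  induction k with
  | zero => simp
  | succ k ih =>
    intro i hi
    have h1 : i + k * ρ < l.length := by nlinarith [h.1]
    rw [ih i h1]
    have := h.2 (i + k * ρ) (by ring_nf; ring_nf at hi; omega)
    rw [this]
    ring_nf

lemma isPeriod_sub {l : List α} {p q : ℕ} (hp : IsPeriod l p) (hq : IsPeriod l q)
    (hpq : p < q) (hn : p + q ≤ l.length) : IsPeriod l (q - p) := by
  refine ⟨by omega, fun i hi => ?_⟩
  by_cases hc : i + q < l.length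
  · rw [hq.2 i hc]
    have := hp.2 (i + (q - p)) (by omega)
    rw [show i + (q - p) + p = i + q by omega] at this
    exact this.symm
  · have hip : p ≤ i := by omega
    have h1 := hp.2 (i - p) (by omega)
    rw [show i - p + p = i by omega] at h1
    have h2 := hq.2 (i - p) (by omega)
    rw [show i - p + q = i + (q - p) by omega] at h2
    rw [← h1, h2]

lemma fine_wilf {l : List α} : ∀ s p q, p + q ≤ s → IsPeriod l p → IsPeriod l q →
    p + q ≤ l.length → IsPeriod l (Nat.gcd p q) := by
  intro s
  induction s with
  | zero => intro p q hs hp _ _; exact absurd hp.1 (by omega)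
  | succ s ih =>
    intro p q hs hp hq hn
    have hp1 := hp.1
    have hq1 := hq.1
    rcases lt_trichotomy p q with h | h | h
    · have hsub := isPeriod_sub hp hq h hn
      have := ih p (q - p) (by omega) hp hsub (by omega)
      rwa [Nat.gcd_sub_self_right (by omega)] at this
    · subst h; rwa [Nat.gcd_self]
    · have hsub := isPeriod_sub hq hp h (by omega)
      have := ih q (p - q) (by omega) hq hsub (by omega)
      rwa [Nat.gcd_sub_self_right (by omega), Nat.gcd_comm] at this

/-- If `S[x..y]` is `ρ`-periodic and `S[x..y+1]` is not `ρ`-periodic, then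
`S[x..y+1]` is aperiodic, i.e. `2·per(S[x..y+1]) > y − x + 2 = |S[x..y+1]|`. -/
theorem stmt8 (S : List α) (x y ρ : ℕ)
    (hx : 1 ≤ x) (hxy : x ≤ y) (hy : y < S.length)
    (hper : per (sub S x y) = ρ) (hlen : 2 * ρ ≤ y - x + 1)
    (hnot : ¬ (per (sub S x (y + 1)) = ρ ∧ 2 * ρ ≤ y - x + 2)) :
    y - x + 2 < 2 * per (sub S x (y + 1)) := by
  by_contra hcon
  push_neg at hcon
  set n := y - x + 1 with hn
  set T := sub S x y with hT
  set T' := sub S x (y + 1) with hT'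
  have hTlen : T.length = n := by
    simp only [hT, sub, List.length_drop, List.length_take]; omega
  have hT'len : T'.length = n + 1 := by
    simp only [hT', sub, List.length_drop, List.length_take]; omega
  have hTT' : T = T'.take n := by
    rw [hT, hT', sub, sub, List.take_drop,
      show x - 1 + n = y by omega, List.take_take,
      show y ⊓ (y + 1) = y by omega]
  -- basic facts
  have hTne : {ρ : ℕ | IsPeriod T ρ}.Nonempty :=
    ⟨n, isPeriod_of_len (by omega) (by omega)⟩
  have hT'ne : {ρ : ℕ | IsPeriod T' ρ}.Nonempty :=
    ⟨n + 1, isPeriod_of_len (by omega) (by omega)⟩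
  have hρmem : IsPeriod T ρ := hper ▸ Nat.sInf_mem hTne
  set ρ' := per T' with hρ'
  have hρ'mem : IsPeriod T' ρ' := Nat.sInf_mem hT'ne
  -- ρ' is a period of T
  have hρ'T : IsPeriod T ρ' := hTT' ▸ isPeriod_take hρ'mem n
  have hle : ρ ≤ ρ' := hper ▸ Nat.sInf_le hρ'T
  have hρ1 : 1 ≤ ρ := hρmem.1
  have hρ'1 : 1 ≤ ρ' := hρ'mem.1
  -- hcon : 2 * ρ' ≤ y - x + 2 = n + 1
  rcases eq_or_lt_of_le hle with heq | hlt
  · exact hnot ⟨heq.symm, by omega⟩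
  · -- ρ < ρ' ; Fine–Wilf gives gcd ρ ρ' is a period of T
    have hsum : ρ + ρ' ≤ n := by omega
    have hgcd : IsPeriod T (Nat.gcd ρ ρ') :=
      fine_wilf (ρ + ρ') ρ ρ' le_rfl hρmem hρ'T (by omega)
    have h1 : ρ ≤ Nat.gcd ρ ρ' := by
      have := Nat.sInf_le (s := {ρ : ℕ | IsPeriod T ρ}) hgcd
      rwa [show sInf {ρ : ℕ | IsPeriod (sub S x y) ρ} = ρ from hper] at this
    have h2 : Nat.gcd ρ ρ' ≤ ρ := Nat.le_of_dvd (by omega) (Nat.gcd_dvd_left ρ ρ')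
    have hdvd : ρ ∣ ρ' := le_antisymm h2 h1 ▸ Nat.gcd_dvd_right ρ ρ'
    obtain ⟨k, hk⟩ := hdvd
    have hk1 : 1 ≤ k := by nlinarith
    obtain ⟨m, rfl⟩ : ∃ m, k = m + 1 := ⟨k - 1, by omega⟩
    have hkρ : (m + 1 - 1) * ρ + ρ = ρ' := by simp [hk]; ring
    -- getElem? transfer between T and T'
    have htrans : ∀ j, j < n → T[j]? = T'[j]? := by
      intro j hj
      rw [hTT', List.getElem?_take, if_pos hj]
    -- ρ is a period of T'
    have hρT' : IsPeriod T' ρ := by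
      refine ⟨hρ1, fun i hi => ?_⟩
      rw [hT'len] at hi
      by_cases hc : i + ρ < n
      · rw [← htrans i (by omega), ← htrans (i + ρ) hc]
        exact hρmem.2 i (by omega)
      · have hieq : i + ρ = n := by omega
        have hρ'n : ρ' ≤ n := by omega
        have e1 : T'[n - ρ']? = T'[n]? := by
          have := hρ'mem.2 (n - ρ') (by omega)
          rwa [show n - ρ' + ρ' = n by omega] at this
        have e2 : T[n - ρ']? = T[n - ρ]? := by
          have := isPeriod_mul hρmem (m + 1 - 1) (n - ρ') (by rw [hTlen]; omega)
          rwa [show n - ρ' + (m + 1 - 1) * ρ = n - ρ by omega] at this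
        have e3 : T'[i]? = T[n - ρ]? := by
          rw [htrans (n - ρ) (by omega), show n - ρ = i by omega]
        rw [e3, ← e2, htrans (n - ρ') (by omega), e1, show n = i + ρ by omega]
    have : ρ' ≤ ρ := Nat.sInf_le hρT'
    omega
end

section
/- Let S be a string of length n and let f, i, j ∈ [1..n]. Let e_r = LCP(S[f..n], S[j..n]) and e_ℓ = LCP^R(S[1..f], S[1..j]). Then for all integers ℓ, r ≥ 0 with f−ℓ ≥ 1 and f+r ≤ n, the following are equivalent: (a) j−ℓ ≥ 1, j+r ≤ n, S[j−ℓ..j+r] = S[f−ℓ..f+r], and j−ℓ ≤ i ≤ j+r (the string S[f−ℓ..f+r] occurs at position j−ℓ and this occurrence covers index i); (b) j−i ≤ ℓ ≤ e_ℓ−1 and i−j ≤ r ≤ e_r−1. -/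
variable {α : Type*}

/-- The length of the longest common prefix of `U` and `V`. -/
noncomputable def lcp (U V : List α) : ℕ :=
  sSup {l : ℕ | l ≤ U.length ∧ l ≤ V.length ∧ U.take l = V.take l}

/-- The length of the longest common suffix of `U` and `V`. -/
noncomputable def lcpR (U V : List α) : ℕ :=
  sSup {l : ℕ | l ≤ U.length ∧ l ≤ V.length ∧
    U.drop (U.length - l) = V.drop (V.length - l)}

lemma lcp_le_iff {U V : List α} {k : ℕ} :
    k ≤ lcp U V ↔ k ≤ U.length ∧ k ≤ V.length ∧ U.take k = V.take k := by
  set T := {l : ℕ | l ≤ U.length ∧ l ≤ V.length ∧ U.take l = V.take l} with hT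
  have h0 : (0 : ℕ) ∈ T := by simp [hT]
  have hbdd : BddAbove T := ⟨U.length, fun x hx => hx.1⟩
  constructor
  · intro hk
    have hmem : lcp U V ∈ T := Nat.sSup_mem ⟨0, h0⟩ hbdd
    obtain ⟨h1, h2, h3⟩ := hmem
    refine ⟨hk.trans h1, hk.trans h2, ?_⟩
    calc U.take k = (U.take (lcp U V)).take k := by
            rw [List.take_take, min_eq_left hk]
      _ = (V.take (lcp U V)).take k := by rw [h3]
      _ = V.take k := by rw [List.take_take, min_eq_left hk]
  · intro h
    exact le_csSup hbdd h

lemma lcpR_le_iff {U V : List α} {k : ℕ} :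
    k ≤ lcpR U V ↔ k ≤ U.length ∧ k ≤ V.length ∧
      U.drop (U.length - k) = V.drop (V.length - k) := by
  set T := {l : ℕ | l ≤ U.length ∧ l ≤ V.length ∧
      U.drop (U.length - l) = V.drop (V.length - l)} with hT
  have h0 : (0 : ℕ) ∈ T := by simp [hT]
  have hbdd : BddAbove T := ⟨U.length, fun x hx => hx.1⟩
  constructor
  · intro hk
    have hmem : lcpR U V ∈ T := Nat.sSup_mem ⟨0, h0⟩ hbdd
    obtain ⟨h1, h2, h3⟩ := hmem
    refine ⟨hk.trans h1, hk.trans h2, ?_⟩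
    set L := lcpR U V
    have h4 := congrArg (List.drop (L - k)) h3
    rw [List.drop_drop, List.drop_drop] at h4
    rwa [show U.length - L + (L - k) = U.length - k by omega,
      show V.length - L + (L - k) = V.length - k by omega] at h4
  · intro h
    exact le_csSup hbdd h

lemma sub_split (S : List α) (p ℓ r : ℕ) (hp : ℓ + 1 ≤ p) (hpr : p + r ≤ S.length) :
    sub S (p - ℓ) (p + r) = (S.take p).drop (p - (ℓ + 1)) ++ (S.drop p).take r := by
  unfold sub
  rw [List.take_add, List.drop_append]
  have hlen : (S.take p).length = p := by
    rw [List.length_take]; omega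
  rw [hlen]
  have h1 : p - ℓ - 1 = p - (ℓ + 1) := by omega
  have h2 : p - (ℓ + 1) - p = 0 := by omega
  rw [h1, h2, List.drop_zero]

lemma mid_split (S : List α) (p r : ℕ) (hp1 : 1 ≤ p) (hpn : p ≤ S.length) :
    (S.drop (p - 1)).take (r + 1) = (S.take p).drop (p - 1) ++ (S.drop p).take r := by
  have hd : S.drop (p - 1) = (S.take p).drop (p - 1) ++ S.drop p := by
    conv_lhs => rw [← List.take_append_drop p S]
    rw [List.drop_append]
    have hlen : (S.take p).length = p := by rw [List.length_take]; omega
    rw [hlen]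
    have : p - 1 - p = 0 := by omega
    rw [this, List.drop_zero]
  rw [hd, List.take_append]
  have hlen1 : ((S.take p).drop (p - 1)).length = 1 := by
    rw [List.length_drop, List.length_take]; omega
  rw [List.take_of_length_le (by omega), hlen1, Nat.add_sub_cancel]

/-- With `e_r = LCP(S[f..n], S[j..n])` and `e_ℓ = LCP^R(S[1..f], S[1..j])`:
for `ℓ, r ≥ 0` with `f−ℓ ≥ 1` and `f+r ≤ n`, the string `S[f−ℓ..f+r]` occurs
at position `j−ℓ` and this occurrence covers index `i` if and only if
`j−i ≤ ℓ ≤ e_ℓ−1` and `i−j ≤ r ≤ e_r−1`. -/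
theorem stmt11 (S : List α) (n f i j : ℕ) (hn : S.length = n)
    (hf1 : 1 ≤ f) (hfn : f ≤ n) (hi1 : 1 ≤ i) (hin : i ≤ n)
    (hj1 : 1 ≤ j) (hjn : j ≤ n)
    (er el : ℕ)
    (her : er = lcp (S.drop (f - 1)) (S.drop (j - 1)))
    (hel : el = lcpR (S.take f) (S.take j))
    (ℓ r : ℕ) (hℓ : ℓ + 1 ≤ f) (hr : f + r ≤ n) :
    (ℓ + 1 ≤ j ∧ j + r ≤ n ∧ sub S (j - ℓ) (j + r) = sub S (f - ℓ) (f + r) ∧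
      j - ℓ ≤ i ∧ i ≤ j + r)
    ↔ (j ≤ i + ℓ ∧ ℓ < el ∧ i ≤ j + r ∧ r < er) := by
  subst her hel hn
  rw [Nat.lt_iff_add_one_le, Nat.lt_iff_add_one_le, lcp_le_iff, lcpR_le_iff]
  simp only [List.length_drop, List.length_take]
  have htf : (S.take f).length = f := by rw [List.length_take]; omega
  have htj : (S.take j).length = j := by rw [List.length_take]; omega
  rw [show f ⊓ S.length = f from min_eq_left hfn, show j ⊓ S.length = j from min_eq_left hjn]
  constructor
  · rintro ⟨hj, hjr, hsub, hji, hij⟩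
    rw [sub_split S j ℓ r hj hjr, sub_split S f ℓ r hℓ hr] at hsub
    have hlenA : ((S.take j).drop (j - (ℓ + 1))).length =
        ((S.take f).drop (f - (ℓ + 1))).length := by
      rw [List.length_drop, List.length_drop, htf, htj]; omega
    obtain ⟨hA, hB⟩ := List.append_inj hsub hlenA
    have hfsub : f - (ℓ + 1) = f - (ℓ + 1) := rfl
    refine ⟨by omega, ⟨hℓ, hj, hA.symm⟩, hij, ⟨by omega, by omega, ?_⟩⟩
    rw [mid_split S f r hf1 hfn, mid_split S j r hj1 hjn]
    have hA' : (S.take f).drop (f - 1) = (S.take j).drop (j - 1) := by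
      have h4 := congrArg (List.drop ℓ) hA
      rw [List.drop_drop, List.drop_drop] at h4
      rw [show j - (ℓ + 1) + ℓ = j - 1 by omega,
        show f - (ℓ + 1) + ℓ = f - 1 by omega] at h4
      exact h4.symm
    rw [hA', hB]
  · rintro ⟨hji, ⟨_, hj, hA⟩, hij, ⟨hrf, hrj, hC⟩⟩
    have hjr : j + r ≤ S.length := by omega
    refine ⟨hj, hjr, ?_, by omega, hij⟩
    rw [sub_split S j ℓ r hj hjr, sub_split S f ℓ r hℓ hr]
    rw [mid_split S f r hf1 hfn, mid_split S j r hj1 hjn] at hC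
    have hlen1 : ((S.drop (f - 1)).take 1).length = ((S.drop (j - 1)).take 1).length := by
      rw [List.length_take, List.length_take, List.length_drop, List.length_drop]
      omega
    have hlen1' : ((S.take f).drop (f - 1)).length = ((S.take j).drop (j - 1)).length := by
      rw [List.length_drop, List.length_drop, htf, htj]; omega
    obtain ⟨_, hB⟩ := List.append_inj hC hlen1'
    rw [hA, hB]
end

section
/- Let v be a string of length ρ ≥ 1, let W = v^{[D_ℓ;Q;D_r]} with D_ℓ, D_r ∈ [0..ρ−1], Q ≥ 2, and per(W) = ρ, and let u = v^{[d_ℓ;q;d_r]} with d_ℓ, d_r ∈ [0..ρ−1], q ≥ 1, and |u| ≥ 3ρ. Set b_ℓ = 1 if d_ℓ > D_ℓ and b_ℓ = 0 otherwise, and b_r = 1 if d_r > D_r and b_r = 0 otherwise. If u occurs in W, then the leftmost occurrence of u in W starts at position x = D_ℓ − d_ℓ + 1 + b_ℓ·ρ, the rightmost occurrence of u in W ends at position y = D_ℓ + (Q − b_r)·ρ + d_r, and the set of positions of W that lie inside some occurrence of u is exactly the interval [x..y]. -/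
variable {α : Type*}

/-- `X` occurs in `W` at (1-indexed) position `p`, i.e. `W[p..p+|X|−1] = X`. -/
def OccursAt (X W : List α) (p : ℕ) : Prop :=
  1 ≤ p ∧ p + X.length - 1 ≤ W.length ∧ sub W p (p + X.length - 1) = X

/-- `v^{[d₁;q;d₂]}`: the suffix of `v` of length `d₁`, followed by `q` copies
of `v`, followed by the prefix of `v` of length `d₂`. -/
def rep (v : List α) (d₁ q d₂ : ℕ) : List α :=
  v.drop (v.length - d₁) ++ (List.replicate q v).flatten ++ v.take d₂

lemma flatlen (v : List α) (n : ℕ) : ((List.replicate n v).flatten).length = n * v.length := by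
  induction n with
  | zero => simp
  | succ n ih => simp [List.replicate_succ, ih]; ring

lemma flatget (v : List α) {j n : ℕ} (hj : j < n * v.length) :
    ((List.replicate n v).flatten)[j]? = v[j % v.length]? := by
  induction n generalizing j with
  | zero => simp at hj
  | succ n ih =>
    rw [Nat.succ_mul] at hj
    rw [List.replicate_succ, List.flatten_cons]
    by_cases h : j < v.length
    · rw [List.getElem?_append_left h, Nat.mod_eq_of_lt h]
    · push_neg at h
      rw [List.getElem?_append_right h, ih (by omega), Nat.mod_eq_sub_mod h]

lemma replen (v : List α) (d₁ q d₂ : ℕ) (h1 : d₁ ≤ v.length) (h2 : d₂ ≤ v.length) :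
    (rep v d₁ q d₂).length = d₁ + q * v.length + d₂ := by
  simp [rep, flatlen]; omega

lemma repget (v : List α) (d₁ q d₂ i : ℕ) (h1 : d₁ ≤ v.length) (h2 : d₂ ≤ v.length)
    (hi : i < d₁ + q * v.length + d₂) :
    (rep v d₁ q d₂)[i]? = v[(v.length - d₁ + i) % v.length]? := by
  rw [rep, List.append_assoc]
  by_cases h : i < d₁
  · rw [List.getElem?_append_left (by rw [List.length_drop]; omega),
      List.getElem?_drop, Nat.mod_eq_of_lt (by omega)]
  · push_neg at h
    rw [List.getElem?_append_right (by rw [List.length_drop]; omega), List.length_drop]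
    have hsub : i - (v.length - (v.length - d₁)) = i - d₁ := by omega
    rw [hsub]
    have hmod : (v.length - d₁ + i) % v.length = (i - d₁) % v.length := by
      have : v.length - d₁ + i = (i - d₁) + v.length := by omega
      rw [this, Nat.add_mod_right]
    rw [hmod]
    by_cases h' : i - d₁ < q * v.length
    · rw [List.getElem?_append_left (by rw [flatlen]; omega), flatget v h']
    · push_neg at h'
      rw [List.getElem?_append_right (by rw [flatlen]; omega), flatlen]
      have hlt : i - d₁ - q * v.length < d₂ := by omega
      rw [List.getElem?_take, if_pos hlt]
      congr 1
      have h2' : d₂ ≤ v.length := h2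
      have : i - d₁ = (i - d₁ - q * v.length) + q * v.length := by omega
      rw [this, Nat.add_mul_mod_self_right, Nat.mod_eq_of_lt (by omega)]
      omega

lemma occ_char (v : List α) (ρ : ℕ) (hv : v.length = ρ) (hρ : 1 ≤ ρ)
    {Dl Dr dl dr Q q : ℕ} (hDl : Dl < ρ) (hdl : dl < ρ) (hDr : Dr ≤ ρ) (hdr : dr ≤ ρ)
    (W u : List α) (hW : W = rep v Dl Q Dr) (hu : u = rep v dl q dr)
    (hperW : per W = ρ) (hulen : ρ ≤ u.length) (p : ℕ) :
    OccursAt u W p ↔ 1 ≤ p ∧ p + u.length - 1 ≤ W.length ∧ (p - 1 + dl) % ρ = Dl := by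
  have hNW : W.length = Dl + Q * ρ + Dr := by
    rw [hW, replen v _ _ _ (by omega) (by omega), hv]
  have hLu : u.length = dl + q * ρ + dr := by
    rw [hu, replen v _ _ _ (by omega) (by omega), hv]
  have Wget : ∀ j, j < W.length → W[j]? = v[(ρ - Dl + j) % ρ]? := by
    intro j hj
    rw [hNW] at hj
    rw [hW, repget v _ _ _ _ (by omega) (by omega) (by rw [hv]; omega), hv]
  have uget : ∀ i, i < u.length → u[i]? = v[(ρ - dl + i) % ρ]? := by
    intro i hi
    rw [hLu] at hi
    rw [hu, repget v _ _ _ _ (by omega) (by omega) (by rw [hv]; omega), hv]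
  set L := u.length with hL
  set N := W.length with hN
  constructor
  · rintro ⟨hp1, hp2, hp3⟩
    refine ⟨hp1, hp2, ?_⟩
    -- elementwise identity
    have helem : ∀ i, i < L → W[p - 1 + i]? = u[i]? := by
      intro i hi
      rw [← hp3]
      unfold sub
      rw [List.getElem?_drop, List.getElem?_take, if_pos (by omega)]
    have hrot0 : ∀ i, i < L →
        v[(ρ - Dl + (p - 1) + i) % ρ]? = v[(ρ - dl + i) % ρ]? := by
      intro i hi
      have h1 := helem i hi
      rw [Wget _ (by omega), uget _ hi] at h1
      rw [← h1]
      congr 2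
      omega
    set δ := (ρ - Dl + (p - 1) + dl) % ρ with hδ
    by_contra hcon
    have hδne : δ ≠ 0 := by
      intro h0
      apply hcon
      obtain ⟨k, hk⟩ := Nat.dvd_of_mod_eq_zero h0
      rcases k with _ | k
      · omega
      · rw [Nat.mul_succ] at hk
        have he : p - 1 + dl = Dl + ρ * k := by omega
        rw [he, Nat.add_mul_mod_self_left, Nat.mod_eq_of_lt hDl]
    -- rotation identity
    have hrot : ∀ r, r < ρ → v[(r + δ) % ρ]? = v[r]? := by
      intro r hr
      have hi : (r + dl) % ρ < L := lt_of_lt_of_le (Nat.mod_lt _ (by omega)) hulen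
      have h1 := hrot0 ((r + dl) % ρ) hi
      have e2 : (ρ - dl + (r + dl) % ρ) % ρ = r := by
        rw [Nat.add_mod_mod]
        have : ρ - dl + (r + dl) = ρ + r := by omega
        rw [this, Nat.add_comm ρ r, Nat.add_mod_right, Nat.mod_eq_of_lt hr]
      have e1 : (ρ - Dl + (p - 1) + (r + dl) % ρ) % ρ = (r + δ) % ρ := by
        rw [Nat.add_mod_mod]
        have : ρ - Dl + (p - 1) + (r + dl) = (ρ - Dl + (p - 1) + dl) + r := by omega
        rw [this, hδ, Nat.add_comm, Nat.add_mod_mod, Nat.add_comm r _, Nat.add_comm _ r]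
      rw [e1, e2] at h1
      exact h1
    -- δ is a period of W
    have hper : IsPeriod W δ := by
      refine ⟨by omega, ?_⟩
      intro j hj
      rw [Wget j (by omega), Wget (j + δ) hj]
      have s_lt : (ρ - Dl + j) % ρ < ρ := Nat.mod_lt _ (by omega)
      have := hrot _ s_lt
      rw [← this]
      congr 1
      rw [Nat.mod_add_mod]
      congr 1
      omega
    have : ρ ≤ δ := by
      rw [← hperW]
      exact Nat.sInf_le hper
    have : δ < ρ := Nat.mod_lt _ (by omega)
    omega
  · rintro ⟨hp1, hp2, hp3⟩
    refine ⟨hp1, hp2, ?_⟩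
    unfold sub
    apply List.ext_getElem?
    intro i
    rw [List.getElem?_drop, List.getElem?_take]
    by_cases hi : i < L
    · rw [if_pos (by omega), Wget _ (by omega), uget _ hi]
      have hm : (p - 1 + dl) % ρ = Dl % ρ := by rw [hp3, Nat.mod_eq_of_lt hDl]
      have key : (ρ - Dl + (p - 1 + i) + (Dl + dl)) % ρ = (ρ - dl + i + (Dl + dl)) % ρ := by
        have e1 : ρ - Dl + (p - 1 + i) + (Dl + dl) = (p - 1 + dl) + (ρ + i) := by omega
        have e2 : ρ - dl + i + (Dl + dl) = Dl + (ρ + i) := by omega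
        rw [e1, e2]
        exact Nat.ModEq.add_right _ hm
      have key2 : (ρ - Dl + (p - 1 + i)) % ρ = (ρ - dl + i) % ρ :=
        Nat.ModEq.add_right_cancel' (Dl + dl) key
      rw [key2]
    · rw [if_neg (by omega)]
      symm
      exact List.getElem?_eq_none (by omega)

lemma add_dvd_mod (c t ρ : ℕ) (h : ρ ∣ t) : (c + t) % ρ = c % ρ := by
  obtain ⟨k, rfl⟩ := h
  exact Nat.add_mul_mod_self_left c ρ k

/-- If `u = v^{[dℓ;q;dᵣ]}` (with `|u| ≥ 3ρ`) occurs in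
`W = v^{[Dℓ;Q;Dᵣ]}` (with `per W = ρ = |v|`, `Q ≥ 2`), then the leftmost
occurrence of `u` starts at `x = Dℓ − dℓ + 1 + bℓ·ρ`, the rightmost
occurrence ends at `y = Dℓ + (Q − bᵣ)·ρ + dᵣ`, and the positions of `W`
covered by occurrences of `u` are exactly `[x..y]`. -/
theorem stmt13 (v : List α) (ρ : ℕ) (hv : v.length = ρ) (hρ : 1 ≤ ρ)
    (Dl Dr dl dr Q q : ℕ)
    (hDl : Dl < ρ) (hDr : Dr < ρ) (hdl : dl < ρ) (hdr : dr < ρ)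
    (hQ : 2 ≤ Q) (hq : 1 ≤ q)
    (W u : List α) (hW : W = rep v Dl Q Dr) (hu : u = rep v dl q dr)
    (hperW : per W = ρ) (hulen : 3 * ρ ≤ u.length)
    (bl br : ℕ) (hbl : bl = if Dl < dl then 1 else 0)
    (hbr : br = if Dr < dr then 1 else 0)
    (x y : ℕ) (hx : x = Dl + 1 + bl * ρ - dl) (hy : y = Dl + (Q - br) * ρ + dr)
    (hocc : ∃ p : ℕ, OccursAt u W p) :
    OccursAt u W x ∧ (∀ p : ℕ, OccursAt u W p → x ≤ p) ∧
    (∃ p : ℕ, OccursAt u W p ∧ p + u.length - 1 = y) ∧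
    (∀ p : ℕ, OccursAt u W p → p + u.length - 1 ≤ y) ∧
    (∀ m : ℕ, (∃ p : ℕ, OccursAt u W p ∧ p ≤ m ∧ m ≤ p + u.length - 1)
      ↔ (x ≤ m ∧ m ≤ y)) := by
  have hchar := occ_char v ρ hv hρ hDl hdl (le_of_lt hDr) (le_of_lt hdr) W u hW hu hperW
    (by omega)
  have hNW : W.length = Dl + Q * ρ + Dr := by
    rw [hW, replen v _ _ _ (by omega) (by omega), hv]
  have hLu : u.length = dl + q * ρ + dr := by
    rw [hu, replen v _ _ _ (by omega) (by omega), hv]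
  set L := u.length with hL
  set N := W.length with hN
  -- product facts
  have hgq : 1 * ρ ≤ q * ρ := Nat.mul_le_mul_right ρ hq
  have hG : 2 * ρ ≤ Q * ρ := Nat.mul_le_mul_right ρ hQ
  have hbl' : (dl ≤ Dl ∧ bl * ρ = 0) ∨ (Dl < dl ∧ bl * ρ = ρ) := by
    by_cases h : Dl < dl
    · right; rw [hbl, if_pos h]; omega
    · left; rw [hbl, if_neg h]; omega
  have hbr' : (dr ≤ Dr ∧ br * ρ = 0) ∨ (Dr < dr ∧ br * ρ = ρ) := by
    by_cases h : Dr < dr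
    · right; rw [hbr, if_pos h]; omega
    · left; rw [hbr, if_neg h]; omega
  have hbrQ : (Q - br) * ρ = Q * ρ - br * ρ := Nat.sub_mul Q br ρ
  have hx1 : 1 ≤ x ∧ x ≤ ρ := by omega
  -- key mod facts
  have hCx : (x - 1 + dl) % ρ = Dl := by
    have e : x - 1 + dl = Dl + bl * ρ := by omega
    rcases hbl' with ⟨h1, h2⟩ | ⟨h1, h2⟩
    · rw [e, h2, Nat.add_zero]
      exact Nat.mod_eq_of_lt hDl
    · rw [e, h2, Nat.add_mod_right]
      exact Nat.mod_eq_of_lt hDl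
  have hres : ∀ p : ℕ, 1 ≤ p → ((p - 1 + dl) % ρ = Dl ↔ (p - 1) % ρ = x - 1) := by
    intro p hp
    constructor
    · intro h
      have hm : (p - 1 + dl) % ρ = (x - 1 + dl) % ρ := by rw [h, hCx]
      have := Nat.ModEq.add_right_cancel' dl hm
      rw [Nat.ModEq] at this
      rw [this, Nat.mod_eq_of_lt (by omega)]
    · intro h
      have hm : (p - 1) % ρ = (x - 1) % ρ := by rw [h, Nat.mod_eq_of_lt (by omega)]
      have := Nat.ModEq.add_right dl hm
      rw [Nat.ModEq] at this
      rw [this, hCx]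
  have occ' : ∀ p : ℕ, OccursAt u W p ↔ 1 ≤ p ∧ p + L - 1 ≤ N ∧ (p - 1) % ρ = x - 1 := by
    intro p
    rw [hchar p]
    constructor <;> rintro ⟨h1, h2, h3⟩
    · exact ⟨h1, h2, (hres p h1).mp h3⟩
    · exact ⟨h1, h2, (hres p h1).mpr h3⟩
  obtain ⟨p₀, hp₀⟩ := hocc
  rw [occ' p₀] at hp₀
  obtain ⟨hp₀1, hp₀2, hp₀3⟩ := hp₀
  have hxp₀ : x ≤ p₀ := by
    have := Nat.mod_le (p₀ - 1) ρ
    omega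
  have hoccx : OccursAt u W x := by
    rw [occ' x]
    exact ⟨by omega, by omega, by rw [Nat.mod_eq_of_lt (by omega)]⟩
  have hmin : ∀ p : ℕ, OccursAt u W p → x ≤ p := by
    intro p hp
    rw [occ' p] at hp
    have := Nat.mod_le (p - 1) ρ
    omega
  -- y facts
  have hyN : y ≤ N := by omega
  have hNy : N - y < ρ := by omega
  have hyx : y % ρ = (x - 1 + L) % ρ := by
    have e1 : x - 1 + L = (Dl + dr) + (bl * ρ + q * ρ) := by omega
    have e2 : y = (Dl + dr) + (Q * ρ - br * ρ) := by omega
    rw [e1, e2, add_dvd_mod _ _ _ (dvd_add (by rcases hbl' with ⟨_, h2⟩ | ⟨_, h2⟩ <;>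
        rw [h2] <;> simp) (dvd_mul_left ρ q)),
      add_dvd_mod _ _ _ (Nat.dvd_sub (dvd_mul_left ρ Q) (dvd_mul_left ρ br))]
  have hendle : ∀ p : ℕ, OccursAt u W p → p + L - 1 ≤ y := by
    intro p hp
    rw [occ' p] at hp
    obtain ⟨hp1, hp2, hp3⟩ := hp
    have hm : y % ρ = (p + L - 1) % ρ := by
      have e : p + L - 1 = (p - 1) + L := by omega
      rw [e, hyx]
      have hm2 : (x - 1) % ρ = (p - 1) % ρ := by rw [hp3, Nat.mod_eq_of_lt (by omega)]
      exact Nat.ModEq.add_right L hm2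
    by_contra hcon
    push_neg at hcon
    have hd : ρ ∣ (p + L - 1) - y := (Nat.modEq_iff_dvd' (by omega)).mp hm
    have := Nat.le_of_dvd (by omega) hd
    omega
  have hp₀e : p₀ + L - 1 ≤ y := hendle p₀ (by rw [occ' p₀]; exact ⟨hp₀1, hp₀2, hp₀3⟩)
  have hLy : L ≤ y := by omega
  have hpyres : (y - L + 1 - 1) % ρ = x - 1 := by
    have e3 : y - L + L = y := by omega
    have hm : (y - L + L) % ρ = (x - 1 + L) % ρ := by rw [e3, hyx]
    have := Nat.ModEq.add_right_cancel' L hm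
    rw [Nat.ModEq] at this
    have e4 : y - L + 1 - 1 = y - L := by omega
    rw [e4, this, Nat.mod_eq_of_lt (by omega)]
  have hoccy : OccursAt u W (y - L + 1) := by
    rw [occ' _]
    exact ⟨by omega, by omega, hpyres⟩
  refine ⟨hoccx, hmin, ⟨y - L + 1, hoccy, by omega⟩, hendle, ?_⟩
  intro m
  constructor
  · rintro ⟨p, hp, hpm, hmp⟩
    exact ⟨le_trans (hmin p hp) hpm, le_trans hmp (hendle p hp)⟩
  · rintro ⟨hxm, hmy⟩
    have hda := Nat.div_add_mod (m - x) ρ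
    have hml : (m - x) % ρ < ρ := Nat.mod_lt _ (by omega)
    set k := (m - x) / ρ with hk
    set p₁ := x + ρ * k with hp₁
    have hres₁ : (p₁ - 1) % ρ = x - 1 := by
      have e : p₁ - 1 = (x - 1) + ρ * k := by omega
      rw [e, add_dvd_mod _ _ _ (dvd_mul_right ρ k), Nat.mod_eq_of_lt (by omega)]
    rcases le_total p₁ (y - L + 1) with hc | hc
    · refine ⟨p₁, ?_, by omega, by omega⟩
      rw [occ' p₁]
      exact ⟨by omega, by omega, hres₁⟩
    · refine ⟨y - L + 1, hoccy, by omega, by omega⟩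
end

section
/- Let v be a string of length ρ ≥ 1, let W = v^{[D_ℓ;Q;D_r]} with D_ℓ, D_r ∈ [0..ρ−1], Q ≥ 2, and per(W) = ρ, and let u = v^{[d_ℓ;q;d_r]} with d_ℓ, d_r ∈ [0..ρ−1], q ≥ 1, and |u| ≥ 3ρ. Set b_ℓ = 1 if d_ℓ > D_ℓ and b_ℓ = 0 otherwise, and b_r = 1 if d_r > D_r and b_r = 0 otherwise. Then u occurs in W if and only if q ≤ Q − b_ℓ − b_r. -/
variable {α : Type*}

def Fper (v : List α) (ρ x : ℕ) : Option α := v[x % ρ]?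

lemma Fper_congr (v : List α) (ρ : ℕ) {x y : ℕ} (h : x % ρ = y % ρ) :
    Fper v ρ x = Fper v ρ y := by unfold Fper; rw [h]

lemma flat_rep_getElem? (v : List α) (n j : ℕ) (hj : j < n * v.length) :
    ((List.replicate n v).flatten)[j]? = v[j % v.length]? := by
  induction n generalizing j with
  | zero => simp at hj
  | succ n ih =>
    have hρ : 0 < v.length := by
      rcases Nat.eq_zero_or_pos v.length with h | h
      · rw [h, Nat.mul_zero] at hj; omega
      · exact h
    have hexp : (n + 1) * v.length = n * v.length + v.length := by ring
    simp only [List.replicate_succ, List.flatten_cons]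
    by_cases h : j < v.length
    · rw [List.getElem?_append_left h, Nat.mod_eq_of_lt h]
    · push_neg at h
      rw [List.getElem?_append_right h, ih _ (by omega), Nat.mod_eq_sub_mod h]

lemma rep_length (v : List α) (ρ d1 n d2 : ℕ) (hv : v.length = ρ)
    (h1 : d1 ≤ ρ) (h2 : d2 ≤ ρ) :
    (rep v d1 n d2).length = d1 + n * ρ + d2 := by
  subst hv
  simp only [rep, List.length_append, List.length_drop, List.length_take,
    List.length_flatten, List.map_replicate, List.sum_replicate, smul_eq_mul]
  omega

lemma rep_getElem? (v : List α) (ρ d1 n d2 i : ℕ) (hv : v.length = ρ) (hρ : 1 ≤ ρ)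
    (h1 : d1 < ρ) (h2 : d2 ≤ ρ) (hi : i < d1 + n * ρ + d2) :
    (rep v d1 n d2)[i]? = Fper v ρ (i + (ρ - d1)) := by
  subst hv
  have hlen1 : (v.drop (v.length - d1)).length = d1 := by
    rw [List.length_drop]; omega
  have hlen2 : ((List.replicate n v).flatten).length = n * v.length := by
    simp [List.length_flatten, List.map_replicate, List.sum_replicate]
  unfold rep Fper
  rcases Nat.lt_or_ge i d1 with h | h
  · rw [List.getElem?_append_left (by rw [List.length_append, hlen1, hlen2]; omega),
        List.getElem?_append_left (by rw [hlen1]; omega),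
        List.getElem?_drop]
    congr 1
    rw [Nat.mod_eq_of_lt (by omega)]
    omega
  rcases Nat.lt_or_ge i (d1 + n * v.length) with h' | h'
  · rw [List.getElem?_append_left (by rw [List.length_append, hlen1, hlen2]; omega),
        List.getElem?_append_right (by rw [hlen1]; omega), hlen1,
        flat_rep_getElem? v n _ (by omega)]
    congr 1
    have e : i + (v.length - d1) = (i - d1) + v.length := by omega
    rw [e, Nat.add_mod_right]
  · rw [List.getElem?_append_right (by rw [List.length_append, hlen1, hlen2]; omega),
        List.length_append, hlen1, hlen2,
        List.getElem?_take, if_pos (by omega)]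
    congr 1
    have hexp : (n + 1) * v.length = n * v.length + v.length := by ring
    have e1 : i + (v.length - d1) = (i - (d1 + n * v.length)) + (n + 1) * v.length := by omega
    rw [e1, Nat.add_mul_mod_self_right, Nat.mod_eq_of_lt (by omega)]

lemma occursAt_iff (X W : List α) (p : ℕ) :
    OccursAt X W p ↔ 1 ≤ p ∧ (p - 1) + X.length ≤ W.length ∧
      ∀ i < X.length, W[(p - 1) + i]? = X[i]? := by
  unfold OccursAt sub
  constructor
  · rintro ⟨hp, hlen, hsub⟩
    have hpe : p + X.length - 1 = (p - 1) + X.length := by omega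
    refine ⟨hp, by omega, ?_⟩
    intro i hi
    have h := congrArg (fun l : List α => l[i]?) hsub
    rw [List.getElem?_drop, List.getElem?_take, hpe, if_pos (by omega)] at h
    exact h
  · rintro ⟨hp, hlen, hmatch⟩
    have hpe : p + X.length - 1 = (p - 1) + X.length := by omega
    refine ⟨hp, by omega, ?_⟩
    apply List.ext_getElem?
    intro i
    rw [List.getElem?_drop, List.getElem?_take, hpe]
    rcases Nat.lt_or_ge i X.length with h | h
    · rw [if_pos (by omega)]; exact hmatch i h
    · rw [if_neg (by omega)]
      exact (List.getElem?_eq_none h).symm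

/-- `u = v^{[d_ℓ;q;d_r]}` (with `|u| ≥ 3ρ`) occurs in `W = v^{[D_ℓ;Q;D_r]}`
(with `per W = ρ = |v|`, `Q ≥ 2`) if and only if `q ≤ Q − b_ℓ − b_r`. -/
theorem stmt14 (v : List α) (ρ : ℕ) (hv : v.length = ρ) (hρ : 1 ≤ ρ)
    (Dl Dr dl dr Q q : ℕ)
    (hDl : Dl < ρ) (hDr : Dr < ρ) (hdl : dl < ρ) (hdr : dr < ρ)
    (hQ : 2 ≤ Q) (hq : 1 ≤ q)
    (W u : List α) (hW : W = rep v Dl Q Dr) (hu : u = rep v dl q dr)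
    (hperW : per W = ρ) (hulen : 3 * ρ ≤ u.length)
    (bl br : ℕ) (hbl : bl = if Dl < dl then 1 else 0)
    (hbr : br = if Dr < dr then 1 else 0) :
    (∃ p : ℕ, OccursAt u W p) ↔ q ≤ Q - bl - br := by
  subst hW hu
  have hWlen : (rep v Dl Q Dr).length = Dl + Q * ρ + Dr :=
    rep_length v ρ Dl Q Dr hv (by omega) (by omega)
  have hulen' : (rep v dl q dr).length = dl + q * ρ + dr :=
    rep_length v ρ dl q dr hv (by omega) (by omega)
  rw [hulen'] at hulen
  have hWget : ∀ i < Dl + Q * ρ + Dr, (rep v Dl Q Dr)[i]? = Fper v ρ (i + (ρ - Dl)) :=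
    fun i hi => rep_getElem? v ρ Dl Q Dr i hv hρ hDl (by omega) hi
  have huget : ∀ i < dl + q * ρ + dr, (rep v dl q dr)[i]? = Fper v ρ (i + (ρ - dl)) :=
    fun i hi => rep_getElem? v ρ dl q dr i hv hρ hdl (by omega) hi
  have HB : (bl = 0 ∧ bl * ρ = 0 ∧ dl ≤ Dl) ∨ (bl = 1 ∧ bl * ρ = ρ ∧ Dl < dl) := by
    rw [hbl]; split_ifs with h
    · exact Or.inr ⟨rfl, one_mul ρ, h⟩
    · exact Or.inl ⟨rfl, zero_mul ρ, by omega⟩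
  have HBr : (br = 0 ∧ br * ρ = 0 ∧ dr ≤ Dr) ∨ (br = 1 ∧ br * ρ = ρ ∧ Dr < dr) := by
    rw [hbr]; split_ifs with h
    · exact Or.inr ⟨rfl, one_mul ρ, h⟩
    · exact Or.inl ⟨rfl, zero_mul ρ, by omega⟩
  have hble : bl ≤ 1 := by rcases HB with ⟨h, _⟩ | ⟨h, _⟩ <;> omega
  have hbre : br ≤ 1 := by rcases HBr with ⟨h, _⟩ | ⟨h, _⟩ <;> omega
  constructor
  · -- occurrence implies q ≤ Q - bl - br
    rintro ⟨p, hOcc⟩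
    rw [occursAt_iff] at hOcc
    obtain ⟨hp, hlen, hmatch⟩ := hOcc
    rw [hWlen, hulen'] at hlen
    rw [hulen'] at hmatch
    set m := p - 1 with hmdef
    have hmatch' : ∀ i < dl + q * ρ + dr,
        Fper v ρ (m + i + (ρ - Dl)) = Fper v ρ (i + (ρ - dl)) := by
      intro i hi
      rw [← hWget (m + i) (by omega), ← huget i hi]
      exact hmatch i hi
    set a := m + (ρ - Dl) with hadef
    set b := ρ - dl with hbdef
    have hshift : ∀ i < ρ, Fper v ρ (a + i) = Fper v ρ (b + i) := by
      intro i hi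
      have e1 : m + i + (ρ - Dl) = a + i := by omega
      have e2 : i + (ρ - dl) = b + i := by omega
      rw [← e1, ← e2]
      exact hmatch' i (by omega)
    by_cases hab : a % ρ = b % ρ
    · -- aligned case
      have h4 : (m + dl) % ρ = Dl := by
        have h5 : (a + (Dl + dl)) % ρ = (b + (Dl + dl)) % ρ :=
          Nat.ModEq.add_right _ hab
        rw [show a + (Dl + dl) = (m + dl) + ρ by omega,
            show b + (Dl + dl) = Dl + ρ by omega,
            Nat.add_mod_right, Nat.add_mod_right, Nat.mod_eq_of_lt hDl] at h5
        exact h5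
      obtain ⟨k, hk⟩ : ∃ k, m + dl = Dl + k * ρ := by
        refine ⟨(m + dl) / ρ, ?_⟩
        have hdm := Nat.div_add_mod (m + dl) ρ
        have e : ρ * ((m + dl) / ρ) = ((m + dl) / ρ) * ρ := Nat.mul_comm _ _
        omega
      have hblk : bl ≤ k := by
        rcases HB with ⟨h0, _, _⟩ | ⟨h1, _, hd⟩
        · omega
        · rcases Nat.eq_zero_or_pos k with hk0 | hpos
          · rw [hk0, zero_mul] at hk; omega
          · omega
      have hlen2 : k * ρ + q * ρ + dr ≤ Q * ρ + Dr := by omega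
      have ht : k + q ≤ Q := by
        by_contra h
        push_neg at h
        have h2 : (Q + 1) * ρ ≤ (k + q) * ρ := Nat.mul_le_mul_right ρ h
        have e1 : (Q + 1) * ρ = Q * ρ + ρ := by ring
        have e2 : (k + q) * ρ = k * ρ + q * ρ := by ring
        omega
      have ht2 : br = 1 → k + q + 1 ≤ Q := by
        intro hbr1
        rcases HBr with ⟨h0, _, _⟩ | ⟨h1, _, hd⟩
        · omega
        · by_contra h
          push_neg at h
          have hQkq : Q ≤ k + q := by omega
          have h2 : Q * ρ ≤ (k + q) * ρ := Nat.mul_le_mul_right ρ hQkq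
          have e2 : (k + q) * ρ = k * ρ + q * ρ := by ring
          omega
      omega
    · -- misaligned case: contradiction with per W = ρ
      exfalso
      have ha' : a % ρ < ρ := Nat.mod_lt _ hρ
      have hb' : b % ρ < ρ := Nat.mod_lt _ hρ
      set s := (b % ρ + (ρ - a % ρ)) % ρ with hsdef
      have hs_lt : s < ρ := Nat.mod_lt _ hρ
      have hs_add : (a + s) % ρ = b % ρ := by
        have e : a % ρ + (b % ρ + (ρ - a % ρ)) = b % ρ + ρ := by omega
        calc (a + s) % ρ = (a % ρ + s) % ρ := (Nat.mod_add_mod a ρ s).symm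
          _ = (a % ρ + (b % ρ + (ρ - a % ρ))) % ρ := by rw [hsdef, Nat.add_mod_mod]
          _ = (b % ρ + ρ) % ρ := by rw [e]
          _ = b % ρ % ρ := Nat.add_mod_right _ _
          _ = b % ρ := Nat.mod_mod_of_dvd _ dvd_rfl
      have hs_pos : 0 < s := by
        rcases Nat.eq_zero_or_pos s with h0 | h
        · rw [h0, Nat.add_zero] at hs_add; exact absurd hs_add hab
        · exact h
      have hshift' : ∀ i, Fper v ρ (a + i) = Fper v ρ (b + i) := by
        intro i
        have h1 : Fper v ρ (a + i) = Fper v ρ (a + i % ρ) :=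
          Fper_congr v ρ (Nat.ModEq.add_left a (Nat.mod_modEq i ρ)).symm
        have h2 : Fper v ρ (b + i % ρ) = Fper v ρ (b + i) :=
          Fper_congr v ρ (Nat.ModEq.add_left b (Nat.mod_modEq i ρ))
        rw [h1, hshift (i % ρ) (Nat.mod_lt _ hρ), h2]
      have hrot : ∀ x, Fper v ρ x = Fper v ρ (x + s) := by
        intro x
        set j := x + (ρ - a % ρ) with hjdef
        have e1 : a % ρ + j = x + ρ := by omega
        have e2 : (a + j) % ρ = (x + ρ) % ρ := by rw [← Nat.mod_add_mod, e1]
        calc Fper v ρ x = Fper v ρ (x + ρ) := Fper_congr v ρ (Nat.add_mod_right x ρ).symm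
          _ = Fper v ρ (a + j) := Fper_congr v ρ e2.symm
          _ = Fper v ρ (b + j) := hshift' j
          _ = Fper v ρ (a + s + j) := Fper_congr v ρ (Nat.ModEq.add_right j hs_add.symm)
          _ = Fper v ρ (a + j + s) := congrArg (Fper v ρ) (by ring)
          _ = Fper v ρ (x + ρ + s) := Fper_congr v ρ (Nat.ModEq.add_right s e2)
          _ = Fper v ρ (x + s + ρ) := congrArg (Fper v ρ) (by ring)
          _ = Fper v ρ (x + s) := Fper_congr v ρ (Nat.add_mod_right _ _)
      have hper : IsPeriod (rep v Dl Q Dr) s := by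
        refine ⟨hs_pos, fun i hi => ?_⟩
        rw [hWlen] at hi
        rw [hWget i (by omega), hWget (i + s) (by omega)]
        have := hrot (i + (ρ - Dl))
        rw [this]
        exact congrArg (Fper v ρ) (by omega)
      have hle : per (rep v Dl Q Dr) ≤ s := Nat.sInf_le hper
      omega
  · -- construction of an occurrence
    intro hqle
    obtain ⟨m, hm⟩ : ∃ m, m + dl = Dl + bl * ρ := by
      rcases HB with ⟨_, hB, hd⟩ | ⟨_, hB, hd⟩
      · exact ⟨Dl - dl, by omega⟩
      · exact ⟨Dl + bl * ρ - dl, by omega⟩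
    have hdrle : dr ≤ br * ρ + Dr := by
      rcases HBr with ⟨_, hB, hd⟩ | ⟨_, hB, hd⟩ <;> omega
    have hq2 : q + bl + br ≤ Q := by omega
    have hmul : (bl + q + br) * ρ ≤ Q * ρ := Nat.mul_le_mul_right ρ (by omega)
    have hexp : (bl + q + br) * ρ = bl * ρ + q * ρ + br * ρ := by ring
    have hlenle : m + (dl + q * ρ + dr) ≤ Dl + Q * ρ + Dr := by omega
    refine ⟨m + 1, ?_⟩
    rw [occursAt_iff]
    refine ⟨by omega, ?_, ?_⟩
    · rw [hWlen, hulen']; simpa using hlenle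
    · intro i hi
      rw [hulen'] at hi
      simp only [Nat.add_sub_cancel]
      rw [hWget (m + i) (by omega), huget i hi]
      apply Fper_congr
      have e : m + i + (ρ - Dl) = (i + (ρ - dl)) + bl * ρ := by omega
      rw [e, Nat.add_mul_mod_self_right]
end

section
/- Let 𝓡 be a finite set of m axis-aligned rectangles in ℤ², where a rectangle is a set of the form {(x,y) ∈ ℤ² : a ≤ x ≤ b, c ≤ y ≤ d} with a, c ∈ ℤ ∪ {−∞} and b, d ∈ ℤ ∪ {+∞}. Then there exists a set 𝓡' of at most (2m+1)² such rectangles whose union equals ℤ² \ (⋃_{R ∈ 𝓡} R). -/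
/-- A subset of `ℤ²` is an axis-aligned rectangle if it is the product of two
order-convex subsets of `ℤ` (these are exactly the sets
`{x : ℤ | a ≤ x ≤ b}` with `a ∈ ℤ ∪ {−∞}` and `b ∈ ℤ ∪ {+∞}`). -/
def IsZRect (R : Set (ℤ × ℤ)) : Prop :=
  ∃ I J : Set ℤ, I.OrdConnected ∧ J.OrdConnected ∧ R = I ×ˢ J

open Set

namespace Stmt16Aux

lemma tri {I : Set ℤ} (hI : I.OrdConnected) (x : ℤ) :
    (∀ i ∈ I, x < i) ∨ x ∈ I ∨ (∀ i ∈ I, i < x) := by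
  by_contra h
  push_neg at h
  obtain ⟨⟨i, hi, hix⟩, hxI, i', hi', hxi'⟩ := h
  exact hxI (hI.out hi hi' ⟨hix, hxi'⟩)

lemma bel_oc (I : Set ℤ) : OrdConnected {x : ℤ | ∀ i ∈ I, x < i} :=
  ⟨fun _ _ b hb x hx i hi => lt_of_le_of_lt hx.2 (hb i hi)⟩

lemma abv_oc (I : Set ℤ) : OrdConnected {x : ℤ | ∀ i ∈ I, i < x} :=
  ⟨fun a ha _ _ x hx i hi => lt_of_lt_of_le (ha i hi) hx.1⟩

lemma lemA (S : Finset (Set ℤ)) (hS : ∀ I ∈ S, I.OrdConnected) :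
    ∃ P : Finset (Set ℤ), P.card ≤ 2 * S.card + 1 ∧
      (∀ C ∈ P, C.OrdConnected) ∧
      (∀ C ∈ P, ∀ I ∈ S, C ⊆ I ∨ Disjoint C I) ∧
      (∀ x : ℤ, ∃ C ∈ P, x ∈ C) ∧
      (∀ C ∈ P, ∀ C' ∈ P, C ≠ C' → Disjoint C C') := by
  classical
  induction S using Finset.induction with
  | empty =>
    refine ⟨{Set.univ}, by simp, ?_, by simp, fun x => ⟨Set.univ, by simp⟩, by simp⟩
    intro C hC
    simp only [Finset.mem_singleton] at hC
    subst hC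
    exact ordConnected_univ
  | @insert I S hIS ih =>
    obtain ⟨P, hcard, hOC, hsub, hcov, hdisj⟩ := ih (fun J hJ => hS J (Finset.mem_insert_of_mem hJ))
    have hIoc : I.OrdConnected := hS I (Finset.mem_insert_self I S)
    set bel : Set ℤ := {x | ∀ i ∈ I, x < i} with hbel
    set abv : Set ℤ := {x | ∀ i ∈ I, i < x} with habv
    have hbelI : bel ∩ I = ∅ := by
      ext x; simp only [mem_inter_iff, mem_empty_iff_false, iff_false, not_and]
      intro hx hxI; exact lt_irrefl x (hx x hxI)
    have habvI : abv ∩ I = ∅ := by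
      ext x; simp only [mem_inter_iff, mem_empty_iff_false, iff_false, not_and]
      intro hx hxI; exact lt_irrefl x (hx x hxI)
    -- straddle: if I nonempty, an OrdConnected C meeting bel and abv meets I
    have straddle : ∀ C : Set ℤ, C.OrdConnected → (C ∩ bel).Nonempty → (C ∩ abv).Nonempty →
        I.Nonempty → (C ∩ I).Nonempty := by
      rintro C hC ⟨x, hxC, hxb⟩ ⟨z, hzC, hza⟩ ⟨i, hi⟩
      exact ⟨i, hC.out hxC hzC ⟨le_of_lt (hxb i hi), le_of_lt (hza i hi)⟩, hi⟩
    set pieces : Set ℤ → Finset (Set ℤ) :=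
      fun C => ({C ∩ bel, C ∩ I, C ∩ abv} : Finset (Set ℤ)).filter (fun D => D.Nonempty)
      with hpieces
    have pieces_mem : ∀ C D, D ∈ pieces C ↔
        (D = C ∩ bel ∨ D = C ∩ I ∨ D = C ∩ abv) ∧ D.Nonempty := by
      intro C D
      simp [hpieces]
    refine ⟨P.biUnion pieces, ?_, ?_, ?_, ?_, ?_⟩
    · -- cardinality
      -- uniqueness of the cell split at the bottom of I
      have key : ∀ (f : Set ℤ) (hf : OrdConnected f), (f = bel ∨ f = abv) →
          ∀ C ∈ P, ∀ C' ∈ P, (C ∩ f).Nonempty → (C ∩ I).Nonempty →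
          (C' ∩ f).Nonempty → (C' ∩ I).Nonempty → C = C' := by
        rintro f hf hcase C hC C' hC' ⟨x, hxC, hxf⟩ ⟨i0, hi0C, hi0I⟩ ⟨x', hxC', hxf'⟩ ⟨i1, hi1C, hi1I⟩
        by_contra hne
        rcases hcase with rfl | rfl
        · -- f = bel : least element of I
          obtain ⟨t, htI, htle⟩ := Int.exists_least_of_bdd
            (P := fun z => z ∈ I) ⟨x, fun z hz => le_of_lt (hxf z hz)⟩ ⟨i0, hi0I⟩
          have htC : t ∈ C := (hOC C hC).out hxC hi0C ⟨le_of_lt (hxf t htI), htle i0 hi0I⟩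
          have htC' : t ∈ C' := (hOC C' hC').out hxC' hi1C ⟨le_of_lt (hxf' t htI), htle i1 hi1I⟩
          exact (Set.disjoint_left.mp (hdisj C hC C' hC' hne) htC) htC'
        · -- f = abv : greatest element of I
          obtain ⟨t, htI, htle⟩ := Int.exists_greatest_of_bdd
            (P := fun z => z ∈ I) ⟨x, fun z hz => le_of_lt (hxf z hz)⟩ ⟨i0, hi0I⟩
          have htC : t ∈ C := (hOC C hC).out hi0C hxC ⟨htle i0 hi0I, le_of_lt (hxf t htI)⟩
          have htC' : t ∈ C' := (hOC C' hC').out hi1C hxC' ⟨htle i1 hi1I, le_of_lt (hxf' t htI)⟩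
          exact (Set.disjoint_left.mp (hdisj C hC C' hC' hne) htC) htC'
      have hpc : ∀ C ∈ P, (pieces C).card ≤
          1 + (if (C ∩ bel).Nonempty ∧ (C ∩ I).Nonempty then 1 else 0)
            + (if (C ∩ abv).Nonempty ∧ (C ∩ I).Nonempty then 1 else 0) := by
        intro C hC
        by_cases hCI : (C ∩ I).Nonempty
        · by_cases hCb : (C ∩ bel).Nonempty <;> by_cases hCa : (C ∩ abv).Nonempty
          · -- all three: bound 3
            simp only [hCb, hCI, hCa, and_self, if_pos, if_true]
            calc (pieces C).card ≤ ({C ∩ bel, C ∩ I, C ∩ abv} : Finset (Set ℤ)).card :=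
                  Finset.card_filter_le _ _
              _ ≤ 3 := by
                  refine le_trans (Finset.card_insert_le _ _) (Nat.succ_le_succ ?_)
                  exact le_trans (Finset.card_insert_le _ _) (Nat.succ_le_succ (by simp))
          · simp only [hCb, hCI, and_self, if_pos, hCa, false_and, if_false]
            have : pieces C ⊆ {C ∩ bel, C ∩ I} := by
              intro D hD
              rw [pieces_mem] at hD
              obtain ⟨h1 | h1 | h1, h2⟩ := hD
              · simp [h1]
              · simp [h1]
              · exact absurd (h1 ▸ h2) hCa
            calc (pieces C).card ≤ _ := Finset.card_le_card this
              _ ≤ 2 := le_trans (Finset.card_insert_le _ _) (Nat.succ_le_succ (by simp))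
          · simp only [hCa, hCI, and_self, if_pos, hCb, false_and, if_false]
            have : pieces C ⊆ {C ∩ I, C ∩ abv} := by
              intro D hD
              rw [pieces_mem] at hD
              obtain ⟨h1 | h1 | h1, h2⟩ := hD
              · exact absurd (h1 ▸ h2) hCb
              · simp [h1]
              · simp [h1]
            calc (pieces C).card ≤ _ := Finset.card_le_card this
              _ ≤ 2 := le_trans (Finset.card_insert_le _ _) (Nat.succ_le_succ (by simp))
          · simp only [hCa, hCb, false_and, if_false]
            have : pieces C ⊆ {C ∩ I} := by
              intro D hD
              rw [pieces_mem] at hD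
              obtain ⟨h1 | h1 | h1, h2⟩ := hD
              · exact absurd (h1 ▸ h2) hCb
              · simp [h1]
              · exact absurd (h1 ▸ h2) hCa
            calc (pieces C).card ≤ _ := Finset.card_le_card this
              _ ≤ 1 := by simp
        · -- C ∩ I empty : at most one nonempty piece
          simp only [hCI, and_false, if_false]
          refine le_trans ?_ (by norm_num : (1:ℕ) ≤ 1 + 0 + 0)
          rw [Finset.card_le_one]
          intro D hD D' hD'
          rw [pieces_mem] at hD hD'
          obtain ⟨h1, h2⟩ := hD
          obtain ⟨h1', h2'⟩ := hD'
          have hbot : ∀ E, (E = C ∩ bel ∨ E = C ∩ I ∨ E = C ∩ abv) → E.Nonempty →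
              (E = C ∩ bel ∨ E = C ∩ abv) := by
            rintro E (rfl | rfl | rfl) hE
            · exact Or.inl rfl
            · exact absurd hE hCI
            · exact Or.inr rfl
          rcases hbot D h1 h2 with rfl | rfl <;> rcases hbot D' h1' h2' with rfl | rfl
          · rfl
          · -- C∩bel and C∩abv both nonempty
            rcases Set.eq_empty_or_nonempty I with hIe | hIne
            · subst hIe
              have : bel = abv := by
                ext x; simp [hbel, habv]
              rw [this]
            · exact absurd (straddle C (hOC C hC) h2 h2' hIne) hCI
          · rcases Set.eq_empty_or_nonempty I with hIe | hIne
            · subst hIe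
              have : bel = abv := by
                ext x; simp [hbel, habv]
              rw [this]
            · exact absurd (straddle C (hOC C hC) h2' h2 hIne) hCI
          · rfl
      calc (P.biUnion pieces).card ≤ ∑ C ∈ P, (pieces C).card := Finset.card_biUnion_le
        _ ≤ ∑ C ∈ P, (1 + (if (C ∩ bel).Nonempty ∧ (C ∩ I).Nonempty then 1 else 0)
            + (if (C ∩ abv).Nonempty ∧ (C ∩ I).Nonempty then 1 else 0)) :=
            Finset.sum_le_sum hpc
        _ = P.card + (P.filter (fun C => (C ∩ bel).Nonempty ∧ (C ∩ I).Nonempty)).card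
            + (P.filter (fun C => (C ∩ abv).Nonempty ∧ (C ∩ I).Nonempty)).card := by
            rw [Finset.sum_add_distrib, Finset.sum_add_distrib, Finset.sum_const,
              smul_eq_mul, mul_one, Finset.card_filter, Finset.card_filter]
        _ ≤ (2 * S.card + 1) + 1 + 1 := by
            refine Nat.add_le_add (Nat.add_le_add hcard ?_) ?_
            · rw [Finset.card_le_one]
              intro C hC C' hC'
              simp only [Finset.mem_filter] at hC hC'
              exact key bel (bel_oc I) (Or.inl rfl) C hC.1 C' hC'.1 hC.2.1 hC.2.2 hC'.2.1 hC'.2.2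
            · rw [Finset.card_le_one]
              intro C hC C' hC'
              simp only [Finset.mem_filter] at hC hC'
              exact key abv (abv_oc I) (Or.inr rfl) C hC.1 C' hC'.1 hC.2.1 hC.2.2 hC'.2.1 hC'.2.2
        _ ≤ 2 * (insert I S).card + 1 := by
            rw [Finset.card_insert_of_notMem hIS]
            ring_nf
            omega
    · -- ordConnected
      intro D hD
      simp only [Finset.mem_biUnion] at hD
      obtain ⟨C, hC, hDC⟩ := hD
      rw [pieces_mem] at hDC
      rcases hDC.1 with rfl | rfl | rfl
      · exact (hOC C hC).inter (bel_oc I)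
      · exact (hOC C hC).inter hIoc
      · exact (hOC C hC).inter (abv_oc I)
    · -- subset-or-disjoint
      intro D hD J hJ
      simp only [Finset.mem_biUnion] at hD
      obtain ⟨C, hC, hDC⟩ := hD
      rw [pieces_mem] at hDC
      rcases Finset.mem_insert.mp hJ with rfl | hJS
      · rcases hDC.1 with rfl | rfl | rfl
        · right
          rw [Set.disjoint_left]
          intro a ha haJ
          exact lt_irrefl a (ha.2 a haJ)
        · exact Or.inl (Set.inter_subset_right)
        · right
          rw [Set.disjoint_left]
          intro a ha haJ
          exact lt_irrefl a (ha.2 a haJ)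
      · have hDsub : D ⊆ C := by
          rcases hDC.1 with rfl | rfl | rfl <;> exact Set.inter_subset_left
        rcases hsub C hC J hJS with h | h
        · exact Or.inl (hDsub.trans h)
        · exact Or.inr (h.mono_left hDsub)
    · -- cover
      intro x
      obtain ⟨C, hC, hxC⟩ := hcov x
      rcases tri hIoc x with h | h | h
      · exact ⟨C ∩ bel, Finset.mem_biUnion.mpr ⟨C, hC, (pieces_mem _ _).mpr
          ⟨Or.inl rfl, ⟨x, hxC, h⟩⟩⟩, hxC, h⟩
      · exact ⟨C ∩ I, Finset.mem_biUnion.mpr ⟨C, hC, (pieces_mem _ _).mpr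
          ⟨Or.inr (Or.inl rfl), ⟨x, hxC, h⟩⟩⟩, hxC, h⟩
      · exact ⟨C ∩ abv, Finset.mem_biUnion.mpr ⟨C, hC, (pieces_mem _ _).mpr
          ⟨Or.inr (Or.inr rfl), ⟨x, hxC, h⟩⟩⟩, hxC, h⟩
    · -- pairwise disjoint
      intro D hD D' hD' hne
      simp only [Finset.mem_biUnion] at hD hD'
      obtain ⟨C, hC, hDC⟩ := hD
      obtain ⟨C', hC', hDC'⟩ := hD'
      rw [pieces_mem] at hDC hDC'
      by_cases hCC : C = C'
      · subst hCC
        rcases Set.eq_empty_or_nonempty I with hIe | ⟨i, hi⟩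
        · exfalso
          apply hne
          subst hIe
          have hba : bel = abv := by ext x; simp [hbel, habv]
          have norm : ∀ E : Set ℤ, (E = C ∩ bel ∨ E = C ∩ (∅ : Set ℤ) ∨ E = C ∩ abv) →
              E.Nonempty → E = C ∩ bel := by
            rintro E (rfl | rfl | rfl) hE
            · rfl
            · simp at hE
            · rw [hba]
          rw [norm D hDC.1 hDC.2, norm D' hDC'.1 hDC'.2]
        · -- distinct pieces of the same C, I nonempty
          have hd1 : Disjoint (C ∩ bel) (C ∩ I) := by
            rw [Set.disjoint_left]; rintro a ⟨-, ha⟩ ⟨-, haI⟩; exact lt_irrefl a (ha a haI)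
          have hd2 : Disjoint (C ∩ I) (C ∩ abv) := by
            rw [Set.disjoint_left]; rintro a ⟨-, haI⟩ ⟨-, ha⟩; exact lt_irrefl a (ha a haI)
          have hd3 : Disjoint (C ∩ bel) (C ∩ abv) := by
            rw [Set.disjoint_left]
            rintro a ⟨-, ha⟩ ⟨-, ha'⟩
            exact lt_irrefl a (lt_trans (ha i hi) (ha' i hi))
          rcases hDC.1 with rfl | rfl | rfl <;> rcases hDC'.1 with rfl | rfl | rfl <;>
            first
              | exact absurd rfl hne
              | exact hd1
              | exact hd1.symm
              | exact hd2
              | exact hd2.symm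
              | exact hd3
              | exact hd3.symm
      · have h1 : D ⊆ C := by rcases hDC.1 with rfl | rfl | rfl <;> exact Set.inter_subset_left
        have h2 : D' ⊆ C' := by rcases hDC'.1 with rfl | rfl | rfl <;> exact Set.inter_subset_left
        exact ((hdisj C hC C' hC' hCC).mono h1 h2)


lemma decomp {R : Set (ℤ × ℤ)} (h : IsZRect R) :
    (Prod.fst '' R).OrdConnected ∧ (Prod.snd '' R).OrdConnected ∧
      R = (Prod.fst '' R) ×ˢ (Prod.snd '' R) := by
  obtain ⟨I, J, hI, hJ, rfl⟩ := h
  rcases Set.eq_empty_or_nonempty I with rfl | hIne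
  · simp [Set.ordConnected_empty]
  rcases Set.eq_empty_or_nonempty J with rfl | hJne
  · simp [Set.ordConnected_empty]
  rw [Set.fst_image_prod _ hJne, Set.snd_image_prod hIne _]
  exact ⟨hI, hJ, rfl⟩

end Stmt16Aux

open Stmt16Aux

/-- For every finite set `𝓡` of `m` axis-aligned rectangles in `ℤ²`, there is
a set `𝓡'` of at most `(2m+1)²` axis-aligned rectangles whose union is the
complement of the union of `𝓡`. -/
theorem stmt16 (m : ℕ) (𝓡 : Finset (Set (ℤ × ℤ))) (hcard : 𝓡.card = m)
    (hrect : ∀ R ∈ 𝓡, IsZRect R) :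
    ∃ 𝓡' : Finset (Set (ℤ × ℤ)), 𝓡'.card ≤ (2 * m + 1) ^ 2 ∧
      (∀ R ∈ 𝓡', IsZRect R) ∧
      (⋃ R ∈ 𝓡', R) = (⋃ R ∈ 𝓡, R)ᶜ := by
  classical
  set S₁ : Finset (Set ℤ) := 𝓡.image (fun R => Prod.fst '' R) with hS₁
  set S₂ : Finset (Set ℤ) := 𝓡.image (fun R => Prod.snd '' R) with hS₂
  have hS₁oc : ∀ I ∈ S₁, I.OrdConnected := by
    intro I hI
    simp only [hS₁, Finset.mem_image] at hI
    obtain ⟨R, hR, rfl⟩ := hI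
    exact (decomp (hrect R hR)).1
  have hS₂oc : ∀ J ∈ S₂, J.OrdConnected := by
    intro J hJ
    simp only [hS₂, Finset.mem_image] at hJ
    obtain ⟨R, hR, rfl⟩ := hJ
    exact (decomp (hrect R hR)).2.1
  obtain ⟨P₁, hP₁card, hP₁oc, hP₁sub, hP₁cov, -⟩ := lemA S₁ hS₁oc
  obtain ⟨P₂, hP₂card, hP₂oc, hP₂sub, hP₂cov, -⟩ := lemA S₂ hS₂oc
  have hc₁ : P₁.card ≤ 2 * m + 1 := by
    refine hP₁card.trans ?_
    have := Finset.card_image_le (s := 𝓡) (f := fun R => Prod.fst '' R)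
    rw [← hS₁] at this
    omega
  have hc₂ : P₂.card ≤ 2 * m + 1 := by
    refine hP₂card.trans ?_
    have := Finset.card_image_le (s := 𝓡) (f := fun R => Prod.snd '' R)
    rw [← hS₂] at this
    omega
  refine ⟨((P₁ ×ˢ P₂).filter (fun p => ∀ R ∈ 𝓡, Disjoint (p.1 ×ˢ p.2) R)).image
      (fun p : Set ℤ × Set ℤ => p.1 ×ˢ p.2), ?_, ?_, ?_⟩
  · calc _ ≤ ((P₁ ×ˢ P₂).filter (fun p => ∀ R ∈ 𝓡, Disjoint (p.1 ×ˢ p.2) R)).card :=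
        Finset.card_image_le
      _ ≤ (P₁ ×ˢ P₂).card := Finset.card_filter_le _ _
      _ = P₁.card * P₂.card := Finset.card_product _ _
      _ ≤ (2 * m + 1) ^ 2 := by
          rw [sq]; exact Nat.mul_le_mul hc₁ hc₂
  · intro R hR
    simp only [Finset.mem_image, Finset.mem_filter, Finset.mem_product] at hR
    obtain ⟨⟨C, D⟩, ⟨⟨hC, hD⟩, -⟩, rfl⟩ := hR
    exact ⟨C, D, hP₁oc C hC, hP₂oc D hD, rfl⟩
  · ext z
    simp only [Set.mem_iUnion, Set.mem_compl_iff, Finset.mem_image, Finset.mem_filter,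
      Finset.mem_product, exists_prop]
    constructor
    · rintro ⟨E, ⟨⟨C, D⟩, ⟨⟨hC, hD⟩, hdisj⟩, rfl⟩, hz⟩ hz'
      obtain ⟨R, hRmem, hzR⟩ := hz'
      exact Set.disjoint_left.mp (hdisj R hRmem) hz hzR
    · intro hz
      obtain ⟨C, hC, hz1⟩ := hP₁cov z.1
      obtain ⟨D, hD, hz2⟩ := hP₂cov z.2
      refine ⟨C ×ˢ D, ⟨⟨C, D⟩, ⟨⟨hC, hD⟩, ?_⟩, rfl⟩, hz1, hz2⟩
      intro R hR
      obtain ⟨-, -, hRdec⟩ := decomp (hrect R hR)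
      have hIm : (Prod.fst '' R) ∈ S₁ := Finset.mem_image_of_mem _ hR
      have hJm : (Prod.snd '' R) ∈ S₂ := Finset.mem_image_of_mem _ hR
      rcases hP₁sub C hC _ hIm with h1 | h1
      · rcases hP₂sub D hD _ hJm with h2 | h2
        · exfalso
          apply hz
          have hzR : z ∈ R := by
            rw [hRdec]
            exact Set.mem_prod.mpr ⟨h1 hz1, h2 hz2⟩
          exact ⟨R, hR, hzR⟩
        · rw [Set.disjoint_left]
          rintro ⟨a, b⟩ ⟨-, hb⟩ hab
          have : b ∈ Prod.snd '' R := ⟨(a, b), hab, rfl⟩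
          exact Set.disjoint_left.mp h2 hb this
      · rw [Set.disjoint_left]
        rintro ⟨a, b⟩ ⟨ha, -⟩ hab
        have : a ∈ Prod.fst '' R := ⟨(a, b), hab, rfl⟩
        exact Set.disjoint_left.mp h1 ha this
end
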